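/- arXiv:2404.14628 — 4 statements merged into one kernel-verified Lean document; each statement's English description precedes it below -/
import Mathlib

section
/- Let G = (μ,V,W,E,P,f,g) be a GCD graph with edge density δ > 0. Then there is a GCD subgraph G' = (μ,V',W',E',P,f,g) of G with edge density δ' > 0 such that: (a) q(G') ≥ q(G); and (b) for all v ∈ V' and for all w ∈ W', μ(Γ_{G'}(v)) ≥ ((1+τ)/(2+τ))·δ'·μ(W') and μ(Γ_{G'}(w)) ≥ ((1+τ)/(2+τ))·δ'·μ(V'). -/
open Finset

/-- A (bipartite) GCD graph: a measure `μ` on `ℕ`, finite vertex sets `V, W` of positive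
integers, an edge set `E ⊆ V × W`, a (finite) set of primes `P`, and exponent functions
`f, g` such that for every `p ∈ P`: `p^{f(p)} ∣ v` for all `v ∈ V`, `p^{g(p)} ∣ w` for all
`w ∈ W`, and `p^{min(f(p),g(p))}` exactly divides `gcd(v, w)` for every edge `(v, w)`. -/
structure GCDGraph where
  mu : ℕ → ℝ
  mu_nonneg : ∀ n, 0 ≤ mu n
  V : Finset ℕ
  W : Finset ℕ
  V_pos : ∀ v ∈ V, 0 < v
  W_pos : ∀ w ∈ W, 0 < w
  E : Finset (ℕ × ℕ)
  E_sub : E ⊆ V ×ˢ W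
  P : Finset ℕ
  P_prime : ∀ p ∈ P, p.Prime
  f : ℕ → ℕ
  g : ℕ → ℕ
  f_dvd : ∀ p ∈ P, ∀ v ∈ V, p ^ f p ∣ v
  g_dvd : ∀ p ∈ P, ∀ w ∈ W, p ^ g p ∣ w
  gcd_exact : ∀ p ∈ P, ∀ e ∈ E,
    p ^ min (f p) (g p) ∣ Nat.gcd e.1 e.2 ∧ ¬ p ^ (min (f p) (g p) + 1) ∣ Nat.gcd e.1 e.2

namespace GCDGraph

/-- The measure of a finite set of integers: `μ(S) = ∑_{n ∈ S} μ(n)`. -/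
noncomputable def muSet (mu : ℕ → ℝ) (S : Finset ℕ) : ℝ := ∑ n ∈ S, mu n

/-- The measure of a finite set of pairs: `μ(E) = ∑_{(n₁,n₂) ∈ E} μ(n₁) μ(n₂)`. -/
noncomputable def muEdges (mu : ℕ → ℝ) (E : Finset (ℕ × ℕ)) : ℝ := ∑ e ∈ E, mu e.1 * mu e.2

/-- Edge density `δ = μ(E) / (μ(V) μ(W))` (equal to `0` when `μ(V) μ(W) = 0`,
by the Lean convention `x / 0 = 0`). -/
noncomputable def densityRaw (mu : ℕ → ℝ) (V W : Finset ℕ) (E : Finset (ℕ × ℕ)) : ℝ :=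
  muEdges mu E / (muSet mu V * muSet mu W)

/-- The quality
`q = δ^{2+τ} μ(V) μ(W) ∏_{p ∈ P} p^{|f(p)-g(p)|} (1 - 1_{f(p)=g(p)≥1}/p)^{-2} (1 - p^{-1-τ/4})^{-3}`. -/
noncomputable def qualityRaw (τ : ℝ) (mu : ℕ → ℝ) (V W : Finset ℕ) (E : Finset (ℕ × ℕ))
    (P : Finset ℕ) (f g : ℕ → ℕ) : ℝ :=
  densityRaw mu V W E ^ (2 + τ) * muSet mu V * muSet mu W *
    ∏ p ∈ P, ((p : ℝ) ^ (((f p : ℤ) - (g p : ℤ)).natAbs) *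
      ((1 - (if f p = g p ∧ 1 ≤ f p then ((p : ℝ))⁻¹ else 0))⁻¹) ^ 2 *
      ((1 - (p : ℝ) ^ (-1 - τ / 4))⁻¹) ^ 3)

/-- The edge density of a GCD graph. -/
noncomputable def density (G : GCDGraph) : ℝ := densityRaw G.mu G.V G.W G.E

/-- The quality of a GCD graph (with parameter `τ`). -/
noncomputable def quality (τ : ℝ) (G : GCDGraph) : ℝ :=
  qualityRaw τ G.mu G.V G.W G.E G.P G.f G.g

/-- `G'` is a GCD subgraph of `G`. -/
def IsSubgraph (G' G : GCDGraph) : Prop :=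
  G'.mu = G.mu ∧ G'.V ⊆ G.V ∧ G'.W ⊆ G.W ∧ G'.E ⊆ G.E ∧ G.P ⊆ G'.P ∧
    (∀ p ∈ G.P, G'.f p = G.f p) ∧ (∀ p ∈ G.P, G'.g p = G.g p)

/-- `G` is `(P,f,g)`-maximal: every GCD subgraph with the same multiplicative data has
quality at most `q(G)`. -/
def IsMaximal (τ : ℝ) (G : GCDGraph) : Prop :=
  ∀ G' : GCDGraph, IsSubgraph G' G → G'.P = G.P → quality τ G' ≤ quality τ G

/-- `R(G)`: the set of primes `p ∉ P` dividing `gcd(v,w)` for some edge `(v,w)`. -/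
def R (G : GCDGraph) : Set ℕ :=
  {p | p.Prime ∧ p ∉ G.P ∧ ∃ e ∈ G.E, p ∣ Nat.gcd e.1 e.2}

/-- `S_{p^k}`: the subset of elements of `S` exactly divisible by `p^k`. -/
def exactPart (S : Finset ℕ) (p k : ℕ) : Finset ℕ :=
  S.filter fun v => p ^ k ∣ v ∧ ¬ p ^ (k + 1) ∣ v

/-- `E_{p^k, p^ℓ} = E ∩ (V_{p^k} × W_{p^ℓ})`. -/
def edgesAt (G : GCDGraph) (p k l : ℕ) : Finset (ℕ × ℕ) :=
  G.E.filter fun e => e.1 ∈ exactPart G.V p k ∧ e.2 ∈ exactPart G.W p l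

/-- The quality of the GCD subgraph `G_{p^k, p^ℓ}`, with vertex sets `V_{p^k}`, `W_{p^ℓ}`,
edges `E_{p^k,p^ℓ}`, prime set `P ∪ {p}` and `f, g` extended by `f(p) = k`, `g(p) = ℓ`. -/
noncomputable def qualityAt (τ : ℝ) (G : GCDGraph) (p k l : ℕ) : ℝ :=
  qualityRaw τ G.mu (exactPart G.V p k) (exactPart G.W p l) (edgesAt G p k l)
    (insert p G.P) (Function.update G.f p k) (Function.update G.g p l)

noncomputable def C1 (τ : ℝ) : ℝ := 10 ^ 4 / τ
noncomputable def C2 (τ M : ℝ) : ℝ := 10 * M * C1 τ ^ 3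
noncomputable def C3 (τ : ℝ) : ℝ := 10 ^ 3 * C1 τ ^ 3
noncomputable def C4 (τ M : ℝ) : ℝ := 10 ^ 10 * M ^ 2 * C2 τ M ^ 2
noncomputable def C5 (τ M : ℝ) : ℝ := max (C3 τ) ((50 * Real.log (C4 τ M)) ^ 3)
noncomputable def C6 (τ M : ℝ) : ℝ :=
  max (C4 τ M) (max (10 ^ 4 * M * C2 τ M) (C2 τ M ^ (10 / τ)))
noncomputable def C7 (τ M : ℝ) : ℝ := C5 τ M ^ C6 τ M

/-- `R♯(G)`: those `p ∈ R(G)` admitting `k ≥ 0` with `μ(V_{p^k})/μ(V) ≥ 1 − C₂/p` and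
`μ(W_{p^k})/μ(W) ≥ 1 − C₂/p`, and such that `q(G_{p^a,p^b}) < M q(G)` for all `a ≠ b`. -/
def Rsharp (τ M : ℝ) (G : GCDGraph) : Set ℕ :=
  {p ∈ R G |
    (∃ k : ℕ, 1 - C2 τ M / (p : ℝ) ≤ muSet G.mu (exactPart G.V p k) / muSet G.mu G.V ∧
        1 - C2 τ M / (p : ℝ) ≤ muSet G.mu (exactPart G.W p k) / muSet G.mu G.W) ∧
    ∀ a b : ℕ, a ≠ b → qualityAt τ G p a b < M * quality τ G}

/-- `R♭(G) = R(G) \ R♯(G)`. -/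
def Rflat (τ M : ℝ) (G : GCDGraph) : Set ℕ := R G \ Rsharp τ M G

/-- The neighbourhood `Γ_G(v) = {w ∈ W : (v,w) ∈ E}` of a left vertex. -/
def nbhdOfV (G : GCDGraph) (v : ℕ) : Finset ℕ := G.W.filter fun w => (v, w) ∈ G.E

/-- The neighbourhood `Γ_G(w) = {v ∈ V : (v,w) ∈ E}` of a right vertex. -/
def nbhdOfW (G : GCDGraph) (w : ℕ) : Finset ℕ := G.V.filter fun v => (v, w) ∈ G.E

end GCDGraph

open GCDGraph




lemma bernoulli_key (τ x : ℝ) (hτ : 0 < τ) (hτ1 : τ < 1) (hx0 : 0 ≤ x) (hx1 : x ≤ 1) :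
    (1 - x) ^ ((1:ℝ) + τ) ≤ (1 - (1+τ)/(2+τ) * x) ^ ((2:ℝ) + τ) := by
  set c : ℝ := (1+τ)/(2+τ) with hc
  have h2τ : (0:ℝ) < 2 + τ := by linarith
  have hc0 : 0 ≤ c := by positivity
  have hc1 : c ≤ 1 := by rw [hc, div_le_one h2τ]; linarith
  have hbern : (1 - x) ^ c ≤ 1 - c * x := by
    have := rpow_one_add_le_one_add_mul_self (s := -x) (by linarith) hc0 hc1
    simpa [sub_eq_add_neg, mul_neg] using this
  have h1 : (1 - x) ^ ((1:ℝ) + τ) = ((1 - x) ^ c) ^ ((2:ℝ) + τ) := by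
    rw [← Real.rpow_mul (by linarith)]
    congr 1
    rw [hc]
    field_simp
  rw [h1]
  exact Real.rpow_le_rpow (Real.rpow_nonneg (by linarith) _) hbern (by linarith)

set_option maxHeartbeats 1600000 in
lemma real_step (τ A B m Eμ E₂μ : ℝ) (hτ0 : 0 < τ) (hτ1 : τ < 1)
    (hA : 0 < A) (hB : 0 < B) (hE : 0 < Eμ) (hm0 : 0 ≤ m) (hmA : m < A)
    (hE₂low : Eμ - m * ((1+τ)/(2+τ) * (Eμ/(A*B)) * B) ≤ E₂μ) :
    0 < E₂μ/((A-m)*B) ∧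
      (Eμ/(A*B))^((2:ℝ)+τ) * A ≤ (E₂μ/((A-m)*B))^((2:ℝ)+τ) * (A-m) := by
  set c : ℝ := (1+τ)/(2+τ) with hc
  have h2τ : (0:ℝ) < 2 + τ := by linarith
  have hc0 : 0 < c := by positivity
  have hc1 : c < 1 := by rw [hc, div_lt_one h2τ]; linarith
  set x : ℝ := m / A with hxdef
  have hx0 : 0 ≤ x := div_nonneg hm0 hA.le
  have hx1 : x < 1 := (div_lt_one hA).2 hmA
  have hAm : 0 < A - m := by linarith
  set δ : ℝ := Eμ / (A*B) with hδdef
  have hδ0 : 0 < δ := div_pos hE (mul_pos hA hB)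
  have hAmx : A - m = (1-x)*A := by rw [hxdef]; field_simp
  have hcx : 0 < 1 - c*x := by nlinarith
  -- lower bound rewrite
  have hlow : Eμ * (1 - c*x) ≤ E₂μ := by
    have : Eμ - m * (c * δ * B) = Eμ * (1 - c*x) := by
      rw [hδdef, hxdef]; field_simp
    linarith [hE₂low, this.symm.le]
  have hE₂pos : 0 < E₂μ := lt_of_lt_of_le (by nlinarith) hlow
  set δ₂ : ℝ := E₂μ / ((A-m)*B) with hδ₂def
  have hδ₂0 : 0 < δ₂ := div_pos hE₂pos (mul_pos hAm hB)
  refine ⟨hδ₂0, ?_⟩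
  -- δ₂ ≥ δ(1-cx)/(1-x)
  have hδ₂low : δ * (1-c*x) / (1-x) ≤ δ₂ := by
    rw [hδ₂def, hAmx, hδdef]
    rw [div_le_div_iff₀ (by nlinarith) (by nlinarith [mul_pos (mul_pos (show (0:ℝ)<1-x by linarith) hA) hB])]
    have h1x : (0:ℝ) < 1 - x := by linarith
    calc Eμ / (A*B) * (1-c*x) * ((1-x)*A*B)
        = Eμ * (1-c*x) * (1-x) := by field_simp
      _ ≤ E₂μ * (1-x) := by nlinarith
      _ = E₂μ * ((1-x)) := rfl
  have h1x : (0:ℝ) < 1 - x := by linarith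
  have key := bernoulli_key τ x hτ0 hτ1 hx0 hx1.le
  -- main chain
  have hδ₂pow : (δ * (1-c*x) / (1-x)) ^ ((2:ℝ)+τ) ≤ δ₂ ^ ((2:ℝ)+τ) :=
    Real.rpow_le_rpow (by positivity) hδ₂low (by linarith)
  have expand : (δ * (1-c*x) / (1-x)) ^ ((2:ℝ)+τ)
      = δ ^ ((2:ℝ)+τ) * (1-c*x) ^ ((2:ℝ)+τ) / (1-x) ^ ((2:ℝ)+τ) := by
    rw [Real.div_rpow (by positivity) h1x.le, Real.mul_rpow hδ0.le hcx.le]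
  have hfrac : (1-x) ^ ((1:ℝ)+τ) / (1-x) ^ ((2:ℝ)+τ) * ((1-x)*A) = A := by
    have h2 : (1-x) ^ ((2:ℝ)+τ) = (1-x) ^ ((1:ℝ)+τ) * (1-x) := by
      rw [show (2:ℝ)+τ = (1+τ)+1 by ring, Real.rpow_add h1x, Real.rpow_one]
    rw [h2]
    have hp : (0:ℝ) < (1-x) ^ ((1:ℝ)+τ) := Real.rpow_pos_of_pos h1x _
    field_simp
  calc δ ^ ((2:ℝ)+τ) * A
      = δ ^ ((2:ℝ)+τ) * ((1-x) ^ ((1:ℝ)+τ) / (1-x) ^ ((2:ℝ)+τ) * ((1-x)*A)) := by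
        rw [hfrac]
    _ ≤ δ ^ ((2:ℝ)+τ) * ((1-c*x) ^ ((2:ℝ)+τ) / (1-x) ^ ((2:ℝ)+τ) * ((1-x)*A)) := by
        have hδp : 0 ≤ δ ^ ((2:ℝ)+τ) := by positivity
        have hdenom : 0 < (1-x) ^ ((2:ℝ)+τ) := Real.rpow_pos_of_pos h1x _
        have : (1-x) ^ ((1:ℝ)+τ) / (1-x) ^ ((2:ℝ)+τ) ≤ (1-c*x) ^ ((2:ℝ)+τ) / (1-x) ^ ((2:ℝ)+τ) := by
          gcongr
        have h1xA : 0 ≤ (1-x)*A := by positivity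
        nlinarith [mul_le_mul_of_nonneg_right this h1xA]
    _ = (δ * (1-c*x) / (1-x)) ^ ((2:ℝ)+τ) * (A - m) := by
        rw [expand, hAmx]; ring
    _ ≤ δ₂ ^ ((2:ℝ)+τ) * (A - m) := by
        have := mul_le_mul_of_nonneg_right hδ₂pow hAm.le
        linarith

lemma prodFactor_nonneg (τ : ℝ) (hτ : 0 < τ) (P : Finset ℕ) (hP : ∀ p ∈ P, p.Prime)
    (f g : ℕ → ℕ) :
    0 ≤ ∏ p ∈ P, ((p : ℝ) ^ (((f p : ℤ) - (g p : ℤ)).natAbs) *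
      ((1 - (if f p = g p ∧ 1 ≤ f p then ((p : ℝ))⁻¹ else 0))⁻¹) ^ 2 *
      ((1 - (p : ℝ) ^ (-1 - τ / 4))⁻¹) ^ 3) := by
  apply Finset.prod_nonneg
  intro p hp
  have hp2 : (2:ℝ) ≤ (p:ℝ) := by exact_mod_cast (hP p hp).two_le
  have h3 : (0:ℝ) ≤ (1 - (p : ℝ) ^ (-1 - τ / 4))⁻¹ := by
    have : (p:ℝ) ^ (-1 - τ/4 : ℝ) ≤ 1 :=
      Real.rpow_le_one_of_one_le_of_nonpos (by linarith) (by linarith)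
    have : (0:ℝ) ≤ 1 - (p : ℝ) ^ (-1 - τ / 4) := by linarith
    positivity
  have h1 : (0:ℝ) ≤ (p : ℝ) ^ (((f p : ℤ) - (g p : ℤ)).natAbs) := by positivity
  positivity

lemma muSet_nonneg (G : GCDGraph) (S : Finset ℕ) : 0 ≤ muSet G.mu S :=
  Finset.sum_nonneg fun n _ => G.mu_nonneg n

lemma muEdges_nonneg (G : GCDGraph) (E : Finset (ℕ × ℕ)) : 0 ≤ muEdges G.mu E :=
  Finset.sum_nonneg fun e _ => mul_nonneg (G.mu_nonneg e.1) (G.mu_nonneg e.2)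

lemma density_pos_parts (G : GCDGraph) (hδ : 0 < G.density) :
    0 < muSet G.mu G.V ∧ 0 < muSet G.mu G.W ∧ 0 < muEdges G.mu G.E := by
  have hE : 0 ≤ muEdges G.mu G.E := muEdges_nonneg G _
  have hV : 0 ≤ muSet G.mu G.V := muSet_nonneg G _
  have hW : 0 ≤ muSet G.mu G.W := muSet_nonneg G _
  rw [GCDGraph.density, densityRaw] at hδ
  rcases le_or_gt (muSet G.mu G.V * muSet G.mu G.W) 0 with h | h
  · exact absurd (div_nonpos_of_nonneg_of_nonpos hE h) (not_le.2 hδ)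
  · have hVW : 0 < muSet G.mu G.V ∧ 0 < muSet G.mu G.W := by
      constructor <;> nlinarith
    refine ⟨hVW.1, hVW.2, ?_⟩
    by_contra hc
    push_neg at hc
    have : muEdges G.mu G.E = 0 := le_antisymm hc hE
    rw [this, zero_div] at hδ
    exact lt_irrefl _ hδ

lemma filter_fst_eq (G : GCDGraph) (v : ℕ) :
    G.E.filter (fun e => e.1 = v) = (nbhdOfV G v).image (fun w => (v, w)) := by
  ext e
  simp only [Finset.mem_filter, Finset.mem_image, nbhdOfV]
  constructor
  · rintro ⟨he, h1⟩
    refine ⟨e.2, ⟨(Finset.mem_product.1 (G.E_sub he)).2, ?_⟩, ?_⟩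
    · rwa [← h1, Prod.mk.eta]
    · rw [← h1, Prod.mk.eta]
  · rintro ⟨w, ⟨hw, hvw⟩, rfl⟩
    exact ⟨hvw, rfl⟩

lemma muEdges_filter_fst (G : GCDGraph) (v : ℕ) :
    muEdges G.mu (G.E.filter fun e => e.1 ≠ v)
      = muEdges G.mu G.E - G.mu v * muSet G.mu (nbhdOfV G v) := by
  have hsplit := Finset.sum_filter_add_sum_filter_not G.E (fun e => e.1 = v)
    (fun e => G.mu e.1 * G.mu e.2)
  have himg : ∑ e ∈ G.E.filter (fun e => e.1 = v), G.mu e.1 * G.mu e.2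
      = G.mu v * muSet G.mu (nbhdOfV G v) := by
    rw [filter_fst_eq, Finset.sum_image (by intro a _ b _ h; injection h),
      muSet, Finset.mul_sum]
  rw [muEdges, muEdges]
  show ∑ e ∈ G.E.filter (fun e => ¬ e.1 = v), G.mu e.1 * G.mu e.2 = _
  linarith [hsplit, himg]

lemma filter_snd_eq (G : GCDGraph) (w : ℕ) :
    G.E.filter (fun e => e.2 = w) = (nbhdOfW G w).image (fun v => (v, w)) := by
  ext e
  simp only [Finset.mem_filter, Finset.mem_image, nbhdOfW]
  constructor
  · rintro ⟨he, h1⟩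
    refine ⟨e.1, ⟨(Finset.mem_product.1 (G.E_sub he)).1, ?_⟩, ?_⟩
    · rwa [← h1, Prod.mk.eta]
    · rw [← h1, Prod.mk.eta]
  · rintro ⟨u, ⟨hu, huw⟩, rfl⟩
    exact ⟨huw, rfl⟩

lemma muEdges_filter_snd (G : GCDGraph) (w : ℕ) :
    muEdges G.mu (G.E.filter fun e => e.2 ≠ w)
      = muEdges G.mu G.E - G.mu w * muSet G.mu (nbhdOfW G w) := by
  have hsplit := Finset.sum_filter_add_sum_filter_not G.E (fun e => e.2 = w)
    (fun e => G.mu e.1 * G.mu e.2)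
  have himg : ∑ e ∈ G.E.filter (fun e => e.2 = w), G.mu e.1 * G.mu e.2
      = G.mu w * muSet G.mu (nbhdOfW G w) := by
    rw [filter_snd_eq, Finset.sum_image (by intro a _ b _ h; injection h),
      muSet, Finset.mul_sum]
    simp [mul_comm]
  rw [muEdges, muEdges]
  show ∑ e ∈ G.E.filter (fun e => ¬ e.2 = w), G.mu e.1 * G.mu e.2 = _
  linarith [hsplit, himg]

lemma stepV (τ : ℝ) (hτ0 : 0 < τ) (hτ1 : τ < 1) (G : GCDGraph) (hδ : 0 < G.density)
    (v : ℕ) (hvV : v ∈ G.V)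
    (hbad : muSet G.mu (nbhdOfV G v) < (1+τ)/(2+τ) * G.density * muSet G.mu G.W) :
    ∃ G₂ : GCDGraph, G₂.mu = G.mu ∧ G₂.V = G.V.erase v ∧ G₂.W = G.W ∧ G₂.E ⊆ G.E ∧
      G₂.P = G.P ∧ G₂.f = G.f ∧ G₂.g = G.g ∧ 0 < G₂.density ∧
      quality τ G ≤ quality τ G₂ := by
  classical
  set G₂ : GCDGraph :=
    { mu := G.mu
      mu_nonneg := G.mu_nonneg
      V := G.V.erase v
      W := G.W
      V_pos := fun u hu => G.V_pos u (Finset.mem_of_mem_erase hu)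
      W_pos := G.W_pos
      E := G.E.filter fun e => e.1 ≠ v
      E_sub := by
        intro e he
        rw [Finset.mem_filter] at he
        have h := Finset.mem_product.1 (G.E_sub he.1)
        exact Finset.mem_product.2 ⟨Finset.mem_erase.2 ⟨he.2, h.1⟩, h.2⟩
      P := G.P
      P_prime := G.P_prime
      f := G.f
      g := G.g
      f_dvd := fun p hp u hu => G.f_dvd p hp u (Finset.mem_of_mem_erase hu)
      g_dvd := G.g_dvd
      gcd_exact := fun p hp e he => G.gcd_exact p hp e (Finset.mem_of_mem_filter e he) }
    with hG₂
  obtain ⟨hA, hB, hE⟩ := density_pos_parts G hδ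
  set A := muSet G.mu G.V with hAdef
  set B := muSet G.mu G.W with hBdef
  set Eμ := muEdges G.mu G.E with hEdef
  set m := G.mu v with hmdef
  have hm0 : 0 ≤ m := G.mu_nonneg v
  have hmA : m ≤ A := Finset.single_le_sum (fun u _ => G.mu_nonneg u) hvV
  have hΓ0 : 0 ≤ muSet G.mu (nbhdOfV G v) := muSet_nonneg G _
  have hA₂ : muSet G.mu (G.V.erase v) = A - m := Finset.sum_erase_eq_sub hvV
  have hE₂eq : muEdges G.mu G₂.E = Eμ - m * muSet G.mu (nbhdOfV G v) :=
    muEdges_filter_fst G v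
  have hδdef : G.density = Eμ / (A * B) := rfl
  have hABne : (A * B : ℝ) ≠ 0 := by positivity
  have hδAB : G.density * (A * B) = Eμ := by rw [hδdef, div_mul_cancel₀ _ hABne]
  have hc1 : (1+τ)/(2+τ) < 1 := by
    rw [div_lt_one (by linarith)]; linarith
  have hc0 : (0:ℝ) < (1+τ)/(2+τ) := by positivity
  have hE₂low : Eμ - m * ((1+τ)/(2+τ) * (Eμ/(A*B)) * B) ≤ muEdges G.mu G₂.E := by
    rw [hE₂eq, ← hδdef]
    nlinarith [mul_le_mul_of_nonneg_left hbad.le hm0]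
  -- m < A
  have hmA' : m < A := by
    rcases lt_or_ge m A with h | h
    · exact h
    · exfalso
      have hAm0 : muSet G.mu (G.V.erase v) = 0 :=
        le_antisymm (by rw [hA₂]; linarith) (muSet_nonneg G _)
      have hzero : ∀ u ∈ G.V.erase v, G.mu u = 0 := by
        have := (Finset.sum_eq_zero_iff_of_nonneg
          (fun u _ => G.mu_nonneg u)).1 hAm0
        exact this
      have hE₂0 : muEdges G.mu G₂.E = 0 := by
        apply Finset.sum_eq_zero
        intro e he
        have := Finset.mem_product.1 (G₂.E_sub he)
        rw [hzero e.1 this.1, zero_mul]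
      have hlow2 : Eμ - (1+τ)/(2+τ) * Eμ ≤ muEdges G.mu G₂.E := by
        have h1 : m * ((1+τ)/(2+τ) * (Eμ/(A*B)) * B) ≤ A * ((1+τ)/(2+τ) * (Eμ/(A*B)) * B) := by
          apply mul_le_mul_of_nonneg_right hmA
          positivity
        have h2 : A * ((1+τ)/(2+τ) * (Eμ/(A*B)) * B) = (1+τ)/(2+τ) * Eμ := by
          field_simp
        linarith [hE₂low]
      rw [hE₂0] at hlow2
      nlinarith
  obtain ⟨hδ₂pos, hq⟩ := real_step τ A B m Eμ (muEdges G.mu G₂.E) hτ0 hτ1 hA hB hE hm0 hmA' hE₂low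
  have hδ₂eq : G₂.density = muEdges G.mu G₂.E / ((A - m) * B) := by
    show densityRaw G.mu (G.V.erase v) G.W G₂.E = _
    rw [densityRaw, hA₂, ← hBdef]
  refine ⟨G₂, rfl, rfl, rfl, Finset.filter_subset _ _, rfl, rfl, rfl, ?_, ?_⟩
  · rw [hδ₂eq]; exact hδ₂pos
  · have hProd : 0 ≤ ∏ p ∈ G.P, ((p : ℝ) ^ (((G.f p : ℤ) - (G.g p : ℤ)).natAbs) *
        ((1 - (if G.f p = G.g p ∧ 1 ≤ G.f p then ((p : ℝ))⁻¹ else 0))⁻¹) ^ 2 *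
        ((1 - (p : ℝ) ^ (-1 - τ / 4))⁻¹) ^ 3) :=
      prodFactor_nonneg τ hτ0 G.P G.P_prime G.f G.g
    have key : G.density ^ ((2:ℝ)+τ) * A ≤ G₂.density ^ ((2:ℝ)+τ) * (A - m) := by
      rw [hδdef, hδ₂eq]
      exact hq
    show qualityRaw τ G.mu G.V G.W G.E G.P G.f G.g ≤
      qualityRaw τ G.mu (G.V.erase v) G.W G₂.E G.P G.f G.g
    rw [qualityRaw, qualityRaw, hA₂, ← hAdef, ← hBdef]
    have hdG : densityRaw G.mu G.V G.W G.E = G.density := rfl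
    have hdG₂ : densityRaw G.mu (G.V.erase v) G.W G₂.E = G₂.density := by
      show _ = densityRaw G.mu (G.V.erase v) G.W G₂.E
      rfl
    rw [hdG, hdG₂]
    have h2 := mul_le_mul_of_nonneg_right key (mul_nonneg hB.le hProd)
    calc G.density ^ (2+τ) * A * B * _ = G.density ^ ((2:ℝ)+τ) * A * (B * _) := by ring
      _ ≤ G₂.density ^ ((2:ℝ)+τ) * (A - m) * (B * _) := h2
      _ = G₂.density ^ (2+τ) * (A - m) * B * _ := by ring

lemma stepW (τ : ℝ) (hτ0 : 0 < τ) (hτ1 : τ < 1) (G : GCDGraph) (hδ : 0 < G.density)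
    (w : ℕ) (hwW : w ∈ G.W)
    (hbad : muSet G.mu (nbhdOfW G w) < (1+τ)/(2+τ) * G.density * muSet G.mu G.V) :
    ∃ G₂ : GCDGraph, G₂.mu = G.mu ∧ G₂.V = G.V ∧ G₂.W = G.W.erase w ∧ G₂.E ⊆ G.E ∧
      G₂.P = G.P ∧ G₂.f = G.f ∧ G₂.g = G.g ∧ 0 < G₂.density ∧
      quality τ G ≤ quality τ G₂ := by
  classical
  set G₂ : GCDGraph :=
    { mu := G.mu
      mu_nonneg := G.mu_nonneg
      V := G.V
      W := G.W.erase w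
      V_pos := G.V_pos
      W_pos := fun u hu => G.W_pos u (Finset.mem_of_mem_erase hu)
      E := G.E.filter fun e => e.2 ≠ w
      E_sub := by
        intro e he
        rw [Finset.mem_filter] at he
        have h := Finset.mem_product.1 (G.E_sub he.1)
        exact Finset.mem_product.2 ⟨h.1, Finset.mem_erase.2 ⟨he.2, h.2⟩⟩
      P := G.P
      P_prime := G.P_prime
      f := G.f
      g := G.g
      f_dvd := G.f_dvd
      g_dvd := fun p hp u hu => G.g_dvd p hp u (Finset.mem_of_mem_erase hu)
      gcd_exact := fun p hp e he => G.gcd_exact p hp e (Finset.mem_of_mem_filter e he) }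
    with hG₂
  obtain ⟨hA, hB, hE⟩ := density_pos_parts G hδ
  set A := muSet G.mu G.V with hAdef
  set B := muSet G.mu G.W with hBdef
  set Eμ := muEdges G.mu G.E with hEdef
  set m := G.mu w with hmdef
  have hm0 : 0 ≤ m := G.mu_nonneg w
  have hmB : m ≤ B := Finset.single_le_sum (fun u _ => G.mu_nonneg u) hwW
  have hΓ0 : 0 ≤ muSet G.mu (nbhdOfW G w) := muSet_nonneg G _
  have hB₂ : muSet G.mu (G.W.erase w) = B - m := Finset.sum_erase_eq_sub hwW
  have hE₂eq : muEdges G.mu G₂.E = Eμ - m * muSet G.mu (nbhdOfW G w) :=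
    muEdges_filter_snd G w
  have hδdef : G.density = Eμ / (A * B) := rfl
  have hδdef' : G.density = Eμ / (B * A) := by rw [hδdef, mul_comm]
  have hABne : (B * A : ℝ) ≠ 0 := by positivity
  have hc1 : (1+τ)/(2+τ) < 1 := by
    rw [div_lt_one (by linarith)]; linarith
  have hc0 : (0:ℝ) < (1+τ)/(2+τ) := by positivity
  have hE₂low : Eμ - m * ((1+τ)/(2+τ) * (Eμ/(B*A)) * A) ≤ muEdges G.mu G₂.E := by
    rw [hE₂eq, ← hδdef']
    nlinarith [mul_le_mul_of_nonneg_left hbad.le hm0]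
  have hmB' : m < B := by
    rcases lt_or_ge m B with h | h
    · exact h
    · exfalso
      have hBm0 : muSet G.mu (G.W.erase w) = 0 :=
        le_antisymm (by rw [hB₂]; linarith) (muSet_nonneg G _)
      have hzero : ∀ u ∈ G.W.erase w, G.mu u = 0 := by
        have := (Finset.sum_eq_zero_iff_of_nonneg
          (fun u _ => G.mu_nonneg u)).1 hBm0
        exact this
      have hE₂0 : muEdges G.mu G₂.E = 0 := by
        apply Finset.sum_eq_zero
        intro e he
        have := Finset.mem_product.1 (G₂.E_sub he)
        rw [hzero e.2 this.2, mul_zero]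
      have hlow2 : Eμ - (1+τ)/(2+τ) * Eμ ≤ muEdges G.mu G₂.E := by
        have h1 : m * ((1+τ)/(2+τ) * (Eμ/(B*A)) * A) ≤ B * ((1+τ)/(2+τ) * (Eμ/(B*A)) * A) := by
          apply mul_le_mul_of_nonneg_right hmB
          positivity
        have h2 : B * ((1+τ)/(2+τ) * (Eμ/(B*A)) * A) = (1+τ)/(2+τ) * Eμ := by
          field_simp
        linarith [hE₂low]
      rw [hE₂0] at hlow2
      nlinarith
  obtain ⟨hδ₂pos, hq⟩ := real_step τ B A m Eμ (muEdges G.mu G₂.E) hτ0 hτ1 hB hA hE hm0 hmB' hE₂low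
  have hδ₂eq : G₂.density = muEdges G.mu G₂.E / ((B - m) * A) := by
    show densityRaw G.mu G.V (G.W.erase w) G₂.E = _
    rw [densityRaw, hB₂, ← hAdef, mul_comm]
  refine ⟨G₂, rfl, rfl, rfl, Finset.filter_subset _ _, rfl, rfl, rfl, ?_, ?_⟩
  · rw [hδ₂eq]; exact hδ₂pos
  · have hProd : 0 ≤ ∏ p ∈ G.P, ((p : ℝ) ^ (((G.f p : ℤ) - (G.g p : ℤ)).natAbs) *
        ((1 - (if G.f p = G.g p ∧ 1 ≤ G.f p then ((p : ℝ))⁻¹ else 0))⁻¹) ^ 2 *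
        ((1 - (p : ℝ) ^ (-1 - τ / 4))⁻¹) ^ 3) :=
      prodFactor_nonneg τ hτ0 G.P G.P_prime G.f G.g
    have key : G.density ^ ((2:ℝ)+τ) * B ≤ G₂.density ^ ((2:ℝ)+τ) * (B - m) := by
      rw [hδdef', hδ₂eq]
      exact hq
    show qualityRaw τ G.mu G.V G.W G.E G.P G.f G.g ≤
      qualityRaw τ G.mu G.V (G.W.erase w) G₂.E G.P G.f G.g
    rw [qualityRaw, qualityRaw, hB₂, ← hAdef, ← hBdef]
    have hdG : densityRaw G.mu G.V G.W G.E = G.density := rfl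
    have hdG₂ : densityRaw G.mu G.V (G.W.erase w) G₂.E = G₂.density := by
      show _ = densityRaw G.mu G.V (G.W.erase w) G₂.E
      rfl
    rw [hdG, hdG₂]
    have h2 := mul_le_mul_of_nonneg_right key (mul_nonneg hA.le hProd)
    calc G.density ^ (2+τ) * A * B * _ = G.density ^ ((2:ℝ)+τ) * B * (A * _) := by ring
      _ ≤ G₂.density ^ ((2:ℝ)+τ) * (B - m) * (A * _) := h2
      _ = G₂.density ^ (2+τ) * A * (B - m) * _ := by ring

/-- Subgraph with high-degree vertices (`HighDegreeSubgraph`). -/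
theorem high_degree_subgraph (τ : ℝ) (hτ : τ ∈ Set.Ioo (0 : ℝ) (1 / 100))
    (G : GCDGraph) (hδ : 0 < G.density) :
    ∃ G' : GCDGraph, IsSubgraph G' G ∧
      G'.P = G.P ∧ G'.f = G.f ∧ G'.g = G.g ∧
      0 < G'.density ∧ quality τ G ≤ quality τ G' ∧
      (∀ v ∈ G'.V,
        (1 + τ) / (2 + τ) * G'.density * muSet G.mu G'.W ≤ muSet G.mu (nbhdOfV G' v)) ∧
      (∀ w ∈ G'.W,
        (1 + τ) / (2 + τ) * G'.density * muSet G.mu G'.V ≤ muSet G.mu (nbhdOfW G' w)) := by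
  obtain ⟨hτ0, hτsmall⟩ := hτ
  have hτ1 : τ < 1 := by linarith
  suffices H : ∀ n : ℕ, ∀ G : GCDGraph, G.V.card + G.W.card ≤ n → 0 < G.density →
      ∃ G' : GCDGraph, IsSubgraph G' G ∧ G'.P = G.P ∧ G'.f = G.f ∧ G'.g = G.g ∧
        0 < G'.density ∧ quality τ G ≤ quality τ G' ∧
        (∀ v ∈ G'.V,
          (1 + τ) / (2 + τ) * G'.density * muSet G.mu G'.W ≤ muSet G.mu (nbhdOfV G' v)) ∧
        (∀ w ∈ G'.W,
          (1 + τ) / (2 + τ) * G'.density * muSet G.mu G'.V ≤ muSet G.mu (nbhdOfW G' w)) by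
    exact H (G.V.card + G.W.card) G le_rfl hδ
  intro n
  induction n with
  | zero =>
    intro G hcard hδG
    exfalso
    have hV : G.V = ∅ :=
      Finset.card_eq_zero.1 (Nat.le_zero.1 (le_trans (Nat.le_add_right _ _) hcard))
    have hd0 : G.density = 0 := by
      have : muSet G.mu G.V = 0 := by rw [hV]; simp [muSet]
      show densityRaw G.mu G.V G.W G.E = 0
      rw [densityRaw, this, zero_mul, div_zero]
    rw [hd0] at hδG
    exact lt_irrefl 0 hδG
  | succ n ih =>
    intro G hcard hδG
    by_cases h1 : ∃ v ∈ G.V,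
        muSet G.mu (nbhdOfV G v) < (1 + τ) / (2 + τ) * G.density * muSet G.mu G.W
    · obtain ⟨v, hvV, hbad⟩ := h1
      obtain ⟨G₂, hmu, hV, hW, hE, hP, hf, hg, hδ₂, hqual⟩ := stepV τ hτ0 hτ1 G hδG v hvV hbad
      have hcard₂ : G₂.V.card + G₂.W.card ≤ n := by
        rw [hV, hW, Finset.card_erase_of_mem hvV]
        have hpos : 0 < G.V.card := Finset.card_pos.2 ⟨v, hvV⟩
        omega
      obtain ⟨G', hsub, hP', hf', hg', hδ', hq', hdegV, hdegW⟩ := ih G₂ hcard₂ hδ₂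
      rw [hmu] at hdegV hdegW
      obtain ⟨m1, v1, w1, e1, p1, pf1, pg1⟩ := hsub
      refine ⟨G', ⟨m1.trans hmu, ?_, ?_, e1.trans hE, ?_, ?_, ?_⟩,
        hP'.trans hP, hf'.trans hf, hg'.trans hg, hδ', hqual.trans hq', hdegV, hdegW⟩
      · refine v1.trans ?_
        rw [hV]
        exact Finset.erase_subset _ _
      · rw [hW] at w1; exact w1
      · rw [← hP]; exact p1
      · intro p hp; rw [hf', hf]
      · intro p hp; rw [hg', hg]
    · by_cases h2 : ∃ w ∈ G.W,
          muSet G.mu (nbhdOfW G w) < (1 + τ) / (2 + τ) * G.density * muSet G.mu G.V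
      · obtain ⟨w, hwW, hbad⟩ := h2
        obtain ⟨G₂, hmu, hV, hW, hE, hP, hf, hg, hδ₂, hqual⟩ := stepW τ hτ0 hτ1 G hδG w hwW hbad
        have hcard₂ : G₂.V.card + G₂.W.card ≤ n := by
          rw [hV, hW, Finset.card_erase_of_mem hwW]
          have hpos : 0 < G.W.card := Finset.card_pos.2 ⟨w, hwW⟩
          omega
        obtain ⟨G', hsub, hP', hf', hg', hδ', hq', hdegV, hdegW⟩ := ih G₂ hcard₂ hδ₂
        rw [hmu] at hdegV hdegW
        obtain ⟨m1, v1, w1, e1, p1, pf1, pg1⟩ := hsub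
        refine ⟨G', ⟨m1.trans hmu, ?_, ?_, e1.trans hE, ?_, ?_, ?_⟩,
          hP'.trans hP, hf'.trans hf, hg'.trans hg, hδ', hqual.trans hq', hdegV, hdegW⟩
        · rw [hV] at v1; exact v1
        · refine w1.trans ?_
          rw [hW]
          exact Finset.erase_subset _ _
        · rw [← hP]; exact p1
        · intro p hp; rw [hf', hf]
        · intro p hp; rw [hg', hg]
      · push_neg at h1 h2
        exact ⟨G, ⟨rfl, subset_rfl, subset_rfl, subset_rfl, subset_rfl,
          fun _ _ => rfl, fun _ _ => rfl⟩, rfl, rfl, rfl, hδG, le_rfl, h1, h2⟩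
end

section
/- Let G = (μ,V,W,E,P,f,g) be a GCD graph with edge density δ > 0, and let V = V₁ ⊔ ⋯ ⊔ V_I and W = W₁ ⊔ ⋯ ⊔ W_J be partitions of V and W. Then there is a GCD subgraph G' = (μ,V',W',E',P,f,g) of G with edge density δ' > 0 such that q(G') ≥ q(G)/(IJ)^{2+τ}, δ' ≥ δ/(IJ), V' ∈ {V₁,…,V_I}, W' ∈ {W₁,…,W_J}, and E' = E ∩ (V'×W'). -/
open Finset

open GCDGraph

lemma my_muSet_nonneg (mu : ℕ → ℝ) (h : ∀ n, 0 ≤ mu n) (S : Finset ℕ) : 0 ≤ muSet mu S :=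
  Finset.sum_nonneg fun n _ => h n

lemma my_muSet_mono (mu : ℕ → ℝ) (h : ∀ n, 0 ≤ mu n) {S T : Finset ℕ} (hST : S ⊆ T) :
    muSet mu S ≤ muSet mu T :=
  Finset.sum_le_sum_of_subset_of_nonneg hST fun n _ _ => h n

lemma my_muEdges_le (mu : ℕ → ℝ) (h : ∀ n, 0 ≤ mu n) {V W : Finset ℕ} {E : Finset (ℕ × ℕ)}
    (hE : E ⊆ V ×ˢ W) : muEdges mu E ≤ muSet mu V * muSet mu W := by
  calc muEdges mu E ≤ muEdges mu (V ×ˢ W) :=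
        Finset.sum_le_sum_of_subset_of_nonneg hE fun e _ _ => mul_nonneg (h e.1) (h e.2)
    _ = muSet mu V * muSet mu W := by
        rw [muSet, muSet, Finset.sum_mul_sum, muEdges, Finset.sum_product]

lemma my_rpow_helper {x : ℝ} (hx : 0 < x) (c : ℝ) : x ^ (-c) * x = x ^ (1 - c) := by
  nth_rewrite 2 [← Real.rpow_one x]
  rw [← Real.rpow_add hx, neg_add_eq_sub]

lemma my_key {D a x y K c : ℝ} (hD : 0 ≤ D) (hx : 0 < x) (hy : 0 < y) (ha : 0 < a)
    (hK : 0 < K) (hc1 : 1 ≤ c) (hyx : y ≤ x) (hDa : D / K ≤ a) :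
    (D / x) ^ c * x / K ^ c ≤ (a / y) ^ c * y := by
  have hc : (0:ℝ) < c := lt_of_lt_of_le one_pos hc1
  have h1 : D / x / K ≤ a / x := by
    rw [div_right_comm]
    gcongr
  have h3 : (a / x) ^ c * x = a ^ c * x ^ (1 - c) := by
    rw [Real.div_rpow ha.le hx.le, div_eq_mul_inv, ← Real.rpow_neg hx.le, mul_assoc,
      my_rpow_helper hx]
  have h5 : (a / y) ^ c * y = a ^ c * y ^ (1 - c) := by
    rw [Real.div_rpow ha.le hy.le, div_eq_mul_inv, ← Real.rpow_neg hy.le, mul_assoc,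
      my_rpow_helper hy]
  calc (D / x) ^ c * x / K ^ c = (D / x / K) ^ c * x := by
        rw [Real.div_rpow (by positivity) hK.le]; ring
    _ ≤ (a / x) ^ c * x :=
        mul_le_mul_of_nonneg_right (Real.rpow_le_rpow (by positivity) h1 hc.le) hx.le
    _ = a ^ c * x ^ (1 - c) := h3
    _ ≤ a ^ c * y ^ (1 - c) :=
        mul_le_mul_of_nonneg_left (Real.rpow_le_rpow_of_nonpos hy hyx (by linarith))
          (by positivity)
    _ = (a / y) ^ c * y := h5.symm


/-- One subgraph must have limited quality loss (`Pigeonhole`): given partitions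
`V = V₁ ⊔ ⋯ ⊔ V_I` and `W = W₁ ⊔ ⋯ ⊔ W_J`, some induced GCD subgraph on a pair
`(V_i, W_j)` has edge density `≥ δ/(IJ)` and quality `≥ q(G)/(IJ)^{2+τ}`. -/
theorem pigeonhole_subgraph (τ : ℝ) (hτ : τ ∈ Set.Ioo (0 : ℝ) (1 / 100))
    (G : GCDGraph) (hδ : 0 < G.density)
    (I J : ℕ) (hI : 0 < I) (hJ : 0 < J)
    (VP : Fin I → Finset ℕ) (WP : Fin J → Finset ℕ)
    (hVdisj : ∀ i₁ i₂ : Fin I, i₁ ≠ i₂ → Disjoint (VP i₁) (VP i₂))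
    (hWdisj : ∀ j₁ j₂ : Fin J, j₁ ≠ j₂ → Disjoint (WP j₁) (WP j₂))
    (hVun : G.V = Finset.univ.biUnion VP)
    (hWun : G.W = Finset.univ.biUnion WP) :
    ∃ (i : Fin I) (j : Fin J) (G' : GCDGraph), IsSubgraph G' G ∧
      G'.V = VP i ∧ G'.W = WP j ∧
      G'.E = G.E.filter (fun e => e.1 ∈ VP i ∧ e.2 ∈ WP j) ∧
      G'.P = G.P ∧ G'.f = G.f ∧ G'.g = G.g ∧
      0 < G'.density ∧
      quality τ G / ((I * J : ℝ) ^ (2 + τ)) ≤ quality τ G' ∧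
      G.density / (I * J : ℝ) ≤ G'.density := by
  classical
  obtain ⟨hτ0, hτ1⟩ := hτ
  have hmu := G.mu_nonneg
  have hmVW : 0 < muSet G.mu G.V * muSet G.mu G.W := by
    rcases lt_or_eq_of_le (mul_nonneg (my_muSet_nonneg _ hmu G.V) (my_muSet_nonneg _ hmu G.W))
      with h | h
    · exact h
    · exfalso
      rw [density, densityRaw, ← h, div_zero] at hδ
      exact lt_irrefl _ hδ
  have hmE : 0 < muEdges G.mu G.E := by
    have h := hδ
    rw [density, densityRaw] at h
    by_contra hcon
    push_neg at hcon
    exact absurd h (not_lt.mpr (div_nonpos_of_nonpos_of_nonneg hcon hmVW.le))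
  have hK : (0:ℝ) < (I : ℝ) * (J : ℝ) := by positivity
  haveI : Nonempty (Fin I) := ⟨⟨0, hI⟩⟩
  haveI : Nonempty (Fin J) := ⟨⟨0, hJ⟩⟩
  have hsum : ∑ ij : Fin I × Fin J,
      muEdges G.mu (G.E.filter (fun e => e.1 ∈ VP ij.1 ∧ e.2 ∈ WP ij.2)) = muEdges G.mu G.E := by
    simp only [muEdges, Finset.sum_filter]
    rw [Finset.sum_comm]
    refine Finset.sum_congr rfl fun e he => ?_
    have heVW := G.E_sub he
    rw [Finset.mem_product] at heVW
    have h1 : e.1 ∈ Finset.univ.biUnion VP := hVun ▸ heVW.1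
    have h2 : e.2 ∈ Finset.univ.biUnion WP := hWun ▸ heVW.2
    obtain ⟨i₀, -, hi₀⟩ := Finset.mem_biUnion.mp h1
    obtain ⟨j₀, -, hj₀⟩ := Finset.mem_biUnion.mp h2
    rw [Finset.sum_eq_single_of_mem (i₀, j₀) (Finset.mem_univ _)]
    · rw [if_pos ⟨hi₀, hj₀⟩]
    · rintro ⟨i, j⟩ - hne
      rw [if_neg]
      rintro ⟨hvi, hwj⟩
      have hii : i = i₀ := by
        by_contra hii
        exact Finset.disjoint_left.mp (hVdisj i i₀ hii) hvi hi₀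
      have hjj : j = j₀ := by
        by_contra hjj
        exact Finset.disjoint_left.mp (hWdisj j j₀ hjj) hwj hj₀
      exact hne (by rw [hii, hjj])
  have hpig : ∃ ij : Fin I × Fin J, muEdges G.mu G.E / ((I : ℝ) * (J : ℝ)) ≤
      muEdges G.mu (G.E.filter (fun e => e.1 ∈ VP ij.1 ∧ e.2 ∈ WP ij.2)) := by
    by_contra h
    push_neg at h
    have hlt := Finset.sum_lt_sum_of_nonempty (Finset.univ_nonempty)
      (fun ij (_ : ij ∈ Finset.univ) => h ij)
    rw [hsum, Finset.sum_const, Finset.card_univ] at hlt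
    simp only [Fintype.card_prod, Fintype.card_fin, nsmul_eq_mul, Nat.cast_mul] at hlt
    rw [mul_div_cancel₀ _ hK.ne'] at hlt
    exact lt_irrefl _ hlt
  obtain ⟨⟨i, j⟩, hij⟩ := hpig
  set E' := G.E.filter (fun e => e.1 ∈ VP i ∧ e.2 ∈ WP j) with hE'def
  have hVsub : VP i ⊆ G.V := by
    intro v hv
    rw [hVun]
    exact Finset.mem_biUnion.mpr ⟨i, Finset.mem_univ _, hv⟩
  have hWsub : WP j ⊆ G.W := by
    intro w hw
    rw [hWun]
    exact Finset.mem_biUnion.mpr ⟨j, Finset.mem_univ _, hw⟩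
  have hE'sub : E' ⊆ VP i ×ˢ WP j := by
    intro e he
    rw [hE'def, Finset.mem_filter] at he
    exact Finset.mem_product.mpr he.2
  have hmE' : 0 < muEdges G.mu E' := lt_of_lt_of_le (div_pos hmE hK) hij
  have hy : 0 < muSet G.mu (VP i) * muSet G.mu (WP j) :=
    lt_of_lt_of_le hmE' (my_muEdges_le _ hmu hE'sub)
  have hyx : muSet G.mu (VP i) * muSet G.mu (WP j) ≤ muSet G.mu G.V * muSet G.mu G.W :=
    mul_le_mul (my_muSet_mono _ hmu hVsub) (my_muSet_mono _ hmu hWsub)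
      (my_muSet_nonneg _ hmu _) (my_muSet_nonneg _ hmu _)
  refine ⟨i, j,
    { mu := G.mu, mu_nonneg := G.mu_nonneg, V := VP i, W := WP j,
      V_pos := fun v hv => G.V_pos v (hVsub hv),
      W_pos := fun w hw => G.W_pos w (hWsub hw),
      E := E', E_sub := hE'sub, P := G.P, P_prime := G.P_prime, f := G.f, g := G.g,
      f_dvd := fun p hp v hv => G.f_dvd p hp v (hVsub hv),
      g_dvd := fun p hp w hw => G.g_dvd p hp w (hWsub hw),
      gcd_exact := fun p hp e he => G.gcd_exact p hp e (Finset.filter_subset _ _ he) },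
    ⟨rfl, hVsub, hWsub, Finset.filter_subset _ _, subset_rfl, fun _ _ => rfl, fun _ _ => rfl⟩,
    rfl, rfl, rfl, rfl, rfl, rfl, ?_, ?_, ?_⟩
  · show 0 < densityRaw G.mu (VP i) (WP j) E'
    exact div_pos hmE' hy
  · show quality τ G / ((I : ℝ) * (J : ℝ)) ^ (2 + τ) ≤
      qualityRaw τ G.mu (VP i) (WP j) E' G.P G.f G.g
    rw [quality, qualityRaw, qualityRaw, densityRaw, densityRaw]
    have hPr : (0:ℝ) ≤ ∏ p ∈ G.P, ((p : ℝ) ^ (((G.f p : ℤ) - (G.g p : ℤ)).natAbs) *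
        ((1 - (if G.f p = G.g p ∧ 1 ≤ G.f p then ((p : ℝ))⁻¹ else 0))⁻¹) ^ 2 *
        ((1 - (p : ℝ) ^ (-1 - τ / 4))⁻¹) ^ 3) := by
      refine Finset.prod_nonneg fun p hp => ?_
      have hp2 : (2:ℝ) ≤ (p:ℝ) := by exact_mod_cast (G.P_prime p hp).two_le
      have h3 : (p:ℝ) ^ (-1 - τ / 4) < 1 :=
        Real.rpow_lt_one_of_one_lt_of_neg (by linarith) (by linarith)
      have h4 : (0:ℝ) ≤ (1 - (p : ℝ) ^ (-1 - τ / 4))⁻¹ := by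
        rw [inv_nonneg]; linarith
      positivity
    have key := my_key (D := muEdges G.mu G.E) (a := muEdges G.mu E')
      (x := muSet G.mu G.V * muSet G.mu G.W) (y := muSet G.mu (VP i) * muSet G.mu (WP j))
      (K := (I : ℝ) * (J : ℝ)) (c := 2 + τ)
      (Finset.sum_nonneg fun e _ => mul_nonneg (hmu e.1) (hmu e.2)) hmVW hy hmE' hK
      (by linarith) hyx hij
    calc (muEdges G.mu G.E / (muSet G.mu G.V * muSet G.mu G.W)) ^ (2 + τ) *
          muSet G.mu G.V * muSet G.mu G.W * (∏ p ∈ G.P,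
            ((p : ℝ) ^ (((G.f p : ℤ) - (G.g p : ℤ)).natAbs) *
            ((1 - (if G.f p = G.g p ∧ 1 ≤ G.f p then ((p : ℝ))⁻¹ else 0))⁻¹) ^ 2 *
            ((1 - (p : ℝ) ^ (-1 - τ / 4))⁻¹) ^ 3)) / ((I : ℝ) * (J : ℝ)) ^ (2 + τ)
        = ((muEdges G.mu G.E / (muSet G.mu G.V * muSet G.mu G.W)) ^ (2 + τ) *
            (muSet G.mu G.V * muSet G.mu G.W) / ((I : ℝ) * (J : ℝ)) ^ (2 + τ)) *
          (∏ p ∈ G.P, ((p : ℝ) ^ (((G.f p : ℤ) - (G.g p : ℤ)).natAbs) *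
            ((1 - (if G.f p = G.g p ∧ 1 ≤ G.f p then ((p : ℝ))⁻¹ else 0))⁻¹) ^ 2 *
            ((1 - (p : ℝ) ^ (-1 - τ / 4))⁻¹) ^ 3)) := by ring
      _ ≤ ((muEdges G.mu E' / (muSet G.mu (VP i) * muSet G.mu (WP j))) ^ (2 + τ) *
            (muSet G.mu (VP i) * muSet G.mu (WP j))) *
          (∏ p ∈ G.P, ((p : ℝ) ^ (((G.f p : ℤ) - (G.g p : ℤ)).natAbs) *
            ((1 - (if G.f p = G.g p ∧ 1 ≤ G.f p then ((p : ℝ))⁻¹ else 0))⁻¹) ^ 2 *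
            ((1 - (p : ℝ) ^ (-1 - τ / 4))⁻¹) ^ 3)) :=
          mul_le_mul_of_nonneg_right key hPr
      _ = (muEdges G.mu E' / (muSet G.mu (VP i) * muSet G.mu (WP j))) ^ (2 + τ) *
          muSet G.mu (VP i) * muSet G.mu (WP j) * (∏ p ∈ G.P,
            ((p : ℝ) ^ (((G.f p : ℤ) - (G.g p : ℤ)).natAbs) *
            ((1 - (if G.f p = G.g p ∧ 1 ≤ G.f p then ((p : ℝ))⁻¹ else 0))⁻¹) ^ 2 *
            ((1 - (p : ℝ) ^ (-1 - τ / 4))⁻¹) ^ 3)) := by ring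
  · show G.density / ((I : ℝ) * (J : ℝ)) ≤ densityRaw G.mu (VP i) (WP j) E'
    rw [density, densityRaw, densityRaw]
    calc muEdges G.mu G.E / (muSet G.mu G.V * muSet G.mu G.W) / ((I : ℝ) * (J : ℝ))
        = muEdges G.mu G.E / ((I : ℝ) * (J : ℝ)) / (muSet G.mu G.V * muSet G.mu G.W) :=
          div_right_comm _ _ _
      _ ≤ muEdges G.mu E' / (muSet G.mu G.V * muSet G.mu G.W) := by gcongr
      _ ≤ muEdges G.mu E' / (muSet G.mu (VP i) * muSet G.mu (WP j)) := by
          apply div_le_div_of_nonneg_left hmE'.le hy hyx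
end

section
/- Let G = (μ,V,W,E,P,f,g) be a GCD graph with edge density δ > 0. Let p ∈ R(G), r ∈ ℤ_{≥1} and k ∈ ℤ_{≥0} be such that p^r > C₄ and μ(W_{p^k})/μ(W) ≥ 1 − C₂/p. Set L_{k,r} = {ℓ ∈ ℤ_{≥0} : |ℓ − k| ≥ r+1}. Then one of the following holds: (a) there is ℓ ∈ L_{k,r} such that q(G_{p^k,p^ℓ}) > M·q(G); or (b) ∑_{ℓ∈L_{k,r}} μ(E_{p^k,p^ℓ}) ≤ μ(E)/(4p^{1+τ/4}). -/
open Finset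

open GCDGraph

/-! Suppose (a) fails. For `|ℓ - k| > r` the set `W_{p^ℓ}` is disjoint from the heavy part
`W_{p^k}`, so `μ(W_{p^ℓ}) ≤ (C₂/p) μ(W)`. Passing to `G_{p^k,p^ℓ}` only adds the factor
`p^{|k-ℓ|} (1 - p^{-1-τ/4})^{-3} ≥ p^{|k-ℓ|}` to the product in the quality, so
`q(G_{p^k,p^ℓ}) ≤ M q(G)` becomes `μ(E_{p^k,p^ℓ})^{2+τ} p^{|ℓ-k|} ≤ M (C₂/p)^{1+τ} μ(E)^{2+τ}`.
After taking `(2+τ)`-th roots the edge measures decay geometrically in `|ℓ - k|` with ratio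
`p^{-1/(2+τ)} ≤ 4/5`, so their sum is at most ten times the bound at `|ℓ - k| = r + 1`, and
`p^r > C₄ = (10⁵ M C₂)²` makes this at most `μ(E)/(4 p^{1+τ/4})`. -/

theorem rpow_inv_mul_mul_rpow_neg_inv_pow {K E x t : ℝ} (hK : 0 ≤ K) (hE : 0 ≤ E) (hx : 0 < x)
    (ht : t ≠ 0) (j : ℕ) :
    K ^ t⁻¹ * E * (x ^ (-t⁻¹)) ^ j = (K * E ^ t / x ^ j) ^ t⁻¹ := by
  rw [Real.div_rpow (by positivity) (by positivity), Real.mul_rpow hK (by positivity),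
    Real.rpow_rpow_inv hE ht, Real.rpow_pow_comm hx.le, Real.rpow_neg (by positivity),
    div_eq_mul_inv]

theorem le_rpow_inv_mul_mul_pow_of_rpow_mul_pow_le {y K E x t : ℝ} {j : ℕ} (hy : 0 ≤ y)
    (hK : 0 ≤ K) (hE : 0 ≤ E) (hx : 0 < x) (ht : 0 < t) (h : y ^ t * x ^ j ≤ K * E ^ t) :
    y ≤ K ^ t⁻¹ * E * (x ^ (-t⁻¹)) ^ j := by
  rw [rpow_inv_mul_mul_rpow_neg_inv_pow hK hE hx ht.ne', Real.le_rpow_inv_iff_of_pos hy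
    (by positivity) ht, le_div_iff₀ (by positivity)]
  exact h

theorem rpow_neg_inv_le_four_fifths {x t : ℝ} (hx : 2 ≤ x) (ht : 0 < t) (ht3 : t ≤ 3) :
    x ^ (-t⁻¹) ≤ 4 / 5 := by
  have hρ0 : 0 < x ^ (-t⁻¹) := by positivity
  have hρ1 : x ^ (-t⁻¹) ≤ 1 :=
    Real.rpow_le_one_of_one_le_of_nonpos (by linarith) (neg_nonpos.2 (inv_nonneg.2 ht.le))
  have hcube : (x ^ (-t⁻¹)) ^ 3 ≤ 1 / 2 :=
    calc (x ^ (-t⁻¹)) ^ 3 = (x ^ (-t⁻¹)) ^ (3 : ℝ) := (Real.rpow_natCast _ 3).symm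
      _ ≤ (x ^ (-t⁻¹)) ^ t := Real.rpow_le_rpow_of_exponent_ge hρ0 hρ1 ht3
      _ = x⁻¹ := by
        rw [← Real.rpow_mul (by linarith), neg_mul, inv_mul_cancel₀ ht.ne', Real.rpow_neg_one]
      _ ≤ 1 / 2 := by rw [one_div]; exact inv_anti₀ two_pos hx
  exact le_of_pow_le_pow_left₀ three_ne_zero (by norm_num) (hcube.trans (by norm_num))

theorem div_rpow_two_add_mul (τ : ℝ) {e m : ℝ} (he : 0 ≤ e) (hm : 0 < m) :
    (e / m) ^ (2 + τ) * m = e ^ (2 + τ) / m ^ (1 + τ) := by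
  rw [Real.div_rpow he hm.le, show (2 : ℝ) + τ = 1 + τ + 1 by ring, Real.rpow_add_one hm.ne']
  field_simp

theorem sum_pow_le_of_injOn {ρ : ℝ} (hρ0 : 0 ≤ ρ) (hρ1 : ρ < 1) {s : Finset ℕ} {f : ℕ → ℕ}
    {n : ℕ} (hf : Set.InjOn f s) (hn : ∀ l ∈ s, n ≤ f l) :
    ∑ l ∈ s, ρ ^ f l ≤ ρ ^ n / (1 - ρ) := by
  classical
  rw [← sum_image hf]
  have hIco : s.image f ⊆ Ico n ((s.image f).sup id + 1) := fun d hd => by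
    obtain ⟨l, hl, rfl⟩ := mem_image.1 hd
    exact mem_Ico.2 ⟨hn l hl, Nat.lt_succ_of_le (le_sup (f := id) hd)⟩
  exact (sum_le_sum_of_subset_of_nonneg hIco fun _ _ _ => pow_nonneg hρ0 _).trans
    (geom_sum_Ico_le_of_lt_one hρ0 hρ1)

theorem tsum_ite_le_of_le_geometric {a : ℕ → ℝ} {B ρ : ℝ} (hB : 0 ≤ B) (hρ0 : 0 ≤ ρ)
    (hρ1 : ρ < 1) (k n : ℕ)
    (ha : ∀ l : ℕ, n ≤ ((l : ℤ) - (k : ℤ)).natAbs → a l ≤ B * ρ ^ ((l : ℤ) - (k : ℤ)).natAbs) :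
    ∑' l : ℕ, (if n ≤ ((l : ℤ) - (k : ℤ)).natAbs then a l else 0) ≤
      2 * B * ρ ^ n / (1 - ρ) := by
  classical
  set d : ℕ → ℕ := fun l => ((l : ℤ) - (k : ℤ)).natAbs
  have hgeom (s : Finset ℕ) : ∑ l ∈ s with n ≤ d l, ρ ^ d l ≤ 2 * (ρ ^ n / (1 - ρ)) := by
    rw [← sum_filter_add_sum_filter_not _ (k ≤ ·), two_mul]
    gcongr <;>
      refine sum_pow_le_of_injOn hρ0 hρ1 ?_ fun l hl => (mem_filter.1 (mem_filter.1 hl).1).2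
    all_goals
      intro x hx y hy hxy
      simp only [mem_coe, mem_filter, d] at hx hy hxy
      omega
  refine tsum_le_of_sum_le' (by have := sub_pos.2 hρ1; positivity) fun s => ?_
  calc ∑ l ∈ s, (if n ≤ d l then a l else 0)
      ≤ ∑ l ∈ s, (if n ≤ d l then B * ρ ^ d l else 0) :=
        sum_le_sum fun l _ => by split_ifs with h; exacts [ha l h, le_rfl]
    _ = B * ∑ l ∈ s with n ≤ d l, ρ ^ d l := by rw [← sum_filter, mul_sum]
    _ ≤ B * (2 * (ρ ^ n / (1 - ρ))) := by gcongr; exact hgeom s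
    _ = 2 * B * ρ ^ n / (1 - ρ) := by ring

namespace GCDGraph

theorem exactPart_subset (S : Finset ℕ) (p k : ℕ) : exactPart S p k ⊆ S :=
  filter_subset _ _

theorem disjoint_exactPart (S : Finset ℕ) (p : ℕ) {k l : ℕ} (h : k ≠ l) :
    Disjoint (exactPart S p k) (exactPart S p l) := by
  rw [disjoint_left]
  intro a hk hl
  simp only [exactPart, mem_filter] at hk hl
  rcases h.lt_or_gt with h | h
  · exact hk.2.2 ((pow_dvd_pow p h).trans hl.2.1)
  · exact hl.2.2 ((pow_dvd_pow p h).trans hk.2.1)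

theorem edgesAt_subset_product (G : GCDGraph) (p k l : ℕ) :
    edgesAt G p k l ⊆ exactPart G.V p k ×ˢ exactPart G.W p l :=
  fun _ he => mem_product.2 (mem_filter.1 he).2

section Measure

variable {mu : ℕ → ℝ}

theorem muSet_nonneg (hmu : ∀ n, 0 ≤ mu n) (S : Finset ℕ) : 0 ≤ muSet mu S :=
  sum_nonneg fun n _ => hmu n

theorem muSet_mono (hmu : ∀ n, 0 ≤ mu n) {S T : Finset ℕ} (h : S ⊆ T) :
    muSet mu S ≤ muSet mu T :=
  sum_le_sum_of_subset_of_nonneg h fun n _ _ => hmu n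

theorem muEdges_nonneg (hmu : ∀ n, 0 ≤ mu n) (E : Finset (ℕ × ℕ)) : 0 ≤ muEdges mu E :=
  sum_nonneg fun e _ => mul_nonneg (hmu e.1) (hmu e.2)

theorem muEdges_le_muSet_mul_muSet (hmu : ∀ n, 0 ≤ mu n) {E : Finset (ℕ × ℕ)}
    {S T : Finset ℕ} (h : E ⊆ S ×ˢ T) : muEdges mu E ≤ muSet mu S * muSet mu T := by
  rw [muSet, muSet, sum_mul_sum, ← sum_product']
  exact sum_le_sum_of_subset_of_nonneg h fun e _ _ => mul_nonneg (hmu e.1) (hmu e.2)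

theorem densityRaw_nonneg (hmu : ∀ n, 0 ≤ mu n) (V W : Finset ℕ) (E : Finset (ℕ × ℕ)) :
    0 ≤ densityRaw mu V W E :=
  div_nonneg (muEdges_nonneg hmu E) (mul_nonneg (muSet_nonneg hmu V) (muSet_nonneg hmu W))

theorem muSet_exactPart_le_of_ne (hmu : ∀ n, 0 ≤ mu n) {S : Finset ℕ}
    (hS : 0 < muSet mu S) {p k l : ℕ} {c : ℝ}
    (hk : 1 - c ≤ muSet mu (exactPart S p k) / muSet mu S) (hl : l ≠ k) :
    muSet mu (exactPart S p l) ≤ c * muSet mu S := by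
  have hsum : muSet mu (exactPart S p k) + muSet mu (exactPart S p l) ≤ muSet mu S := by
    rw [muSet, muSet, ← sum_union (disjoint_exactPart S p hl.symm)]
    exact muSet_mono hmu (union_subset (exactPart_subset S p k) (exactPart_subset S p l))
  rw [le_div_iff₀ hS] at hk
  linarith

end Measure

theorem muSet_mul_muSet_pos_of_density_pos {G : GCDGraph} (hδ : 0 < G.density) :
    0 < muSet G.mu G.V * muSet G.mu G.W := by
  refine (mul_nonneg (muSet_nonneg G.mu_nonneg _) (muSet_nonneg G.mu_nonneg _)).lt_of_ne' ?_
  intro h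
  rw [density, densityRaw, h, div_zero] at hδ
  exact hδ.false

noncomputable def localFactor (τ : ℝ) (p a b : ℕ) : ℝ :=
  (p : ℝ) ^ ((a : ℤ) - (b : ℤ)).natAbs *
    ((1 - (if a = b ∧ 1 ≤ a then (p : ℝ)⁻¹ else 0))⁻¹) ^ 2 *
    ((1 - (p : ℝ) ^ (-1 - τ / 4))⁻¹) ^ 3

theorem qualityRaw_eq (τ : ℝ) (mu : ℕ → ℝ) (V W : Finset ℕ) (E : Finset (ℕ × ℕ))
    (P : Finset ℕ) (f g : ℕ → ℕ) :
    qualityRaw τ mu V W E P f g =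
      densityRaw mu V W E ^ (2 + τ) * muSet mu V * muSet mu W *
        ∏ p ∈ P, localFactor τ p (f p) (g p) :=
  rfl

theorem rpow_neg_one_sub_lt_one {τ : ℝ} (hτ : 0 ≤ τ) {p : ℕ} (hp : 1 < p) :
    (p : ℝ) ^ (-1 - τ / 4) < 1 :=
  Real.rpow_lt_one_of_one_lt_of_neg (by exact_mod_cast hp) (by linarith)

theorem localFactor_pos {τ : ℝ} (hτ : 0 ≤ τ) {p : ℕ} (hp : 1 < p) (a b : ℕ) :
    0 < localFactor τ p a b := by
  have hp' : (1 : ℝ) < p := by exact_mod_cast hp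
  have hindicator : (0 : ℝ) < 1 - (if a = b ∧ 1 ≤ a then (p : ℝ)⁻¹ else 0) := by
    split_ifs
    · linarith [inv_lt_one_of_one_lt₀ hp']
    · norm_num
  have hzeta : 0 < 1 - (p : ℝ) ^ (-1 - τ / 4) := sub_pos.2 (rpow_neg_one_sub_lt_one hτ hp)
  unfold localFactor
  positivity

theorem pow_le_localFactor {τ : ℝ} (hτ : 0 ≤ τ) {p : ℕ} (hp : 1 < p) {a b : ℕ} (h : a ≠ b) :
    (p : ℝ) ^ ((a : ℤ) - (b : ℤ)).natAbs ≤ localFactor τ p a b := by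
  have hzeta : 1 ≤ ((1 - (p : ℝ) ^ (-1 - τ / 4))⁻¹) ^ 3 :=
    one_le_pow₀ <| one_le_inv₀ (sub_pos.2 (rpow_neg_one_sub_lt_one hτ hp)) |>.2 <|
      sub_le_self _ (Real.rpow_nonneg (Nat.cast_nonneg p) _)
  rw [localFactor, if_neg (fun h' => h h'.1), sub_zero, inv_one, one_pow, mul_one]
  exact le_mul_of_one_le_right (by positivity) hzeta

theorem qualityAt_eq (τ : ℝ) (G : GCDGraph) {p : ℕ} (hpP : p ∉ G.P) (k l : ℕ) :
    qualityAt τ G p k l =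
      densityRaw G.mu (exactPart G.V p k) (exactPart G.W p l) (edgesAt G p k l) ^ (2 + τ) *
        muSet G.mu (exactPart G.V p k) * muSet G.mu (exactPart G.W p l) *
        (localFactor τ p k l * ∏ q ∈ G.P, localFactor τ q (G.f q) (G.g q)) := by
  have hP : ∏ q ∈ G.P, localFactor τ q (Function.update G.f p k q) (Function.update G.g p l q) =
      ∏ q ∈ G.P, localFactor τ q (G.f q) (G.g q) :=
    prod_congr rfl fun q hq => by
      rw [Function.update_of_ne (ne_of_mem_of_not_mem hq hpP),
        Function.update_of_ne (ne_of_mem_of_not_mem hq hpP)]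
  rw [qualityAt, qualityRaw_eq, prod_insert hpP, Function.update_self, Function.update_self, hP]

theorem density_rpow_mul_pow_le_of_qualityAt_le {τ M : ℝ} (hτ : 0 ≤ τ) {G : GCDGraph} {p : ℕ}
    (hp : 1 < p) (hpP : p ∉ G.P) {k l : ℕ} (hkl : k ≠ l)
    (hq : qualityAt τ G p k l ≤ M * quality τ G) :
    densityRaw G.mu (exactPart G.V p k) (exactPart G.W p l) (edgesAt G p k l) ^ (2 + τ) *
        muSet G.mu (exactPart G.V p k) * muSet G.mu (exactPart G.W p l) *
        (p : ℝ) ^ ((k : ℤ) - (l : ℤ)).natAbs ≤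
      M * (G.density ^ (2 + τ) * muSet G.mu G.V * muSet G.mu G.W) := by
  set rest := ∏ q ∈ G.P, localFactor τ q (G.f q) (G.g q)
  have hrest : 0 < rest := prod_pos fun q hq => localFactor_pos hτ (G.P_prime q hq).one_lt _ _
  have hmu := G.mu_nonneg
  have hsub : 0 ≤ densityRaw G.mu (exactPart G.V p k) (exactPart G.W p l) (edgesAt G p k l) ^
      (2 + τ) * muSet G.mu (exactPart G.V p k) * muSet G.mu (exactPart G.W p l) :=
    mul_nonneg (mul_nonneg (Real.rpow_nonneg (densityRaw_nonneg hmu _ _ _) _)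
      (muSet_nonneg hmu _)) (muSet_nonneg hmu _)
  rw [qualityAt_eq τ G hpP, quality, qualityRaw_eq] at hq
  refine le_of_mul_le_mul_right ?_ hrest
  calc _ ≤ _ * (localFactor τ p k l * rest) := by
        rw [mul_assoc]
        exact mul_le_mul_of_nonneg_left
          (mul_le_mul_of_nonneg_right (pow_le_localFactor hτ hp hkl) hrest.le) hsub
    _ ≤ _ := hq
    _ = _ := by rw [density]; ring

theorem muEdges_edgesAt_rpow_mul_pow_le {τ M c : ℝ} (hτ : 0 ≤ τ) (hM : 0 ≤ M) (hc : 0 ≤ c)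
    {G : GCDGraph} {p : ℕ} (hp : 1 < p) (hpP : p ∉ G.P)
    (hVW : 0 < muSet G.mu G.V * muSet G.mu G.W) {k l : ℕ} (hkl : k ≠ l)
    (hWl : muSet G.mu (exactPart G.W p l) ≤ c * muSet G.mu G.W)
    (hq : qualityAt τ G p k l ≤ M * quality τ G) :
    muEdges G.mu (edgesAt G p k l) ^ (2 + τ) * (p : ℝ) ^ ((l : ℤ) - (k : ℤ)).natAbs ≤
      M * c ^ (1 + τ) * muEdges G.mu G.E ^ (2 + τ) := by
  have hmu := G.mu_nonneg
  have hcore := density_rpow_mul_pow_le_of_qualityAt_le hτ hp hpP hkl hq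
  rw [← Int.natAbs_neg, neg_sub] at hcore
  set a := muSet G.mu (exactPart G.V p k)
  set b := muSet G.mu (exactPart G.W p l)
  set e := muEdges G.mu (edgesAt G p k l)
  set x := (p : ℝ) ^ ((l : ℤ) - (k : ℤ)).natAbs
  have he : 0 ≤ e := muEdges_nonneg hmu _
  have hE : 0 ≤ muEdges G.mu G.E := muEdges_nonneg hmu _
  have hx : 0 ≤ x := by positivity
  have hab : a * b ≤ c * (muSet G.mu G.V * muSet G.mu G.W) := by
    calc a * b ≤ muSet G.mu G.V * (c * muSet G.mu G.W) :=
          mul_le_mul (muSet_mono hmu (exactPart_subset _ _ _)) hWl (muSet_nonneg hmu _)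
            (muSet_nonneg hmu _)
      _ = _ := by ring
  rcases (mul_nonneg (muSet_nonneg hmu _) (muSet_nonneg hmu _) : 0 ≤ a * b).eq_or_lt with
    hab0 | hab0
  · have he0 : e = 0 := le_antisymm
      (hab0 ▸ muEdges_le_muSet_mul_muSet hmu (edgesAt_subset_product G p k l)) he
    rw [he0, Real.zero_rpow (by linarith), zero_mul]
    positivity
  rw [density, densityRaw, densityRaw, mul_assoc _ a b, mul_assoc _ (muSet G.mu G.V),
    div_rpow_two_add_mul τ he hab0, div_rpow_two_add_mul τ hE hVW] at hcore
  calc e ^ (2 + τ) * x = e ^ (2 + τ) / (a * b) ^ (1 + τ) * x * (a * b) ^ (1 + τ) := by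
        field_simp
    _ ≤ M * (muEdges G.mu G.E ^ (2 + τ) / (muSet G.mu G.V * muSet G.mu G.W) ^ (1 + τ)) *
        (c * (muSet G.mu G.V * muSet G.mu G.W)) ^ (1 + τ) :=
      mul_le_mul hcore (Real.rpow_le_rpow hab0.le hab (by linarith)) (by positivity)
        (by positivity)
    _ = M * c ^ (1 + τ) * muEdges G.mu G.E ^ (2 + τ) := by
      rw [Real.mul_rpow hc hVW.le]
      field_simp

theorem muEdges_edgesAt_le_of_qualityAt_le {τ M c : ℝ} (hτ : 0 ≤ τ) (hM : 0 ≤ M) (hc : 0 ≤ c)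
    {G : GCDGraph} {p : ℕ} (hp : 1 < p) (hpP : p ∉ G.P)
    (hVW : 0 < muSet G.mu G.V * muSet G.mu G.W) {k l : ℕ} (hkl : k ≠ l)
    (hWl : muSet G.mu (exactPart G.W p l) ≤ c * muSet G.mu G.W)
    (hq : qualityAt τ G p k l ≤ M * quality τ G) :
    muEdges G.mu (edgesAt G p k l) ≤
      (M * c ^ (1 + τ)) ^ (2 + τ)⁻¹ * muEdges G.mu G.E *
        ((p : ℝ) ^ (-(2 + τ)⁻¹)) ^ ((l : ℤ) - (k : ℤ)).natAbs :=
  le_rpow_inv_mul_mul_pow_of_rpow_mul_pow_le (muEdges_nonneg G.mu_nonneg _) (by positivity)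
    (muEdges_nonneg G.mu_nonneg _) (by positivity) (by linarith)
    (muEdges_edgesAt_rpow_mul_pow_le hτ hM hc hp hpP hVW hkl hWl hq)

theorem forty_rpow_mul_le_pow {τ M p : ℝ} {r : ℕ} (hτ0 : 0 < τ) (hτ1 : τ < 1 / 100)
    (hM : 1 ≤ M) (hp : 1 ≤ p) (hr : 1 ≤ r) (hpr : C4 τ M < p ^ r) :
    40 ^ (2 + τ) * M * C2 τ M ^ (1 + τ) * p ^ ((2 + τ) * τ / 4) ≤ p ^ r := by
  have hC1 : 1 ≤ C1 τ := by rw [C1, le_div_iff₀ hτ0]; linarith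
  have hC2 : 1 ≤ C2 τ M := by
    have := one_le_pow₀ (n := 3) hC1
    rw [C2]; nlinarith
  have hC4 : C4 τ M = (10 ^ 5 * M * C2 τ M) ^ 2 := by rw [C4]; ring
  have hC4one : 1 ≤ C4 τ M := by rw [hC4]; exact one_le_pow₀ (by nlinarith)
  have hforty : (40 : ℝ) ^ (2 + τ) ≤ 10 ^ 5 :=
    calc (40 : ℝ) ^ (2 + τ) ≤ 40 ^ ((3 : ℕ) : ℝ) :=
          Real.rpow_le_rpow_of_exponent_le (by norm_num) (by push_cast; linarith)
      _ ≤ 10 ^ 5 := by rw [Real.rpow_natCast]; norm_num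
  set P := p ^ r
  have hP : 1 ≤ P := hC4one.trans hpr.le
  have hpP : p ≤ P := le_self_pow₀ hp (by omega)
  calc 40 ^ (2 + τ) * M * C2 τ M ^ (1 + τ) * p ^ ((2 + τ) * τ / 4)
      ≤ 10 ^ 5 * M * C2 τ M ^ (1 + τ) * P ^ ((2 + τ) * τ / 4) := by gcongr
    _ ≤ (10 ^ 5 * M) ^ (1 + τ) * C2 τ M ^ (1 + τ) * P ^ ((2 + τ) * τ / 4) := by
        gcongr
        calc 10 ^ 5 * M = (10 ^ 5 * M) ^ (1 : ℝ) := (Real.rpow_one _).symm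
          _ ≤ _ := Real.rpow_le_rpow_of_exponent_le (by nlinarith) (by linarith)
    _ = C4 τ M ^ ((1 + τ) / 2) * P ^ ((2 + τ) * τ / 4) := by
        rw [← Real.mul_rpow (by positivity) (by positivity), hC4,
          ← Real.rpow_natCast (10 ^ 5 * M * C2 τ M) 2, ← Real.rpow_mul (by positivity)]
        ring_nf
    _ ≤ P ^ ((1 + τ) / 2) * P ^ ((2 + τ) * τ / 4) := by gcongr
    _ = P ^ ((1 + τ) / 2 + (2 + τ) * τ / 4) := (Real.rpow_add (by linarith) _ _).symm
    _ ≤ P ^ (1 : ℝ) := Real.rpow_le_rpow_of_exponent_le hP (by nlinarith)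
    _ = P := Real.rpow_one P

theorem ten_mul_rpow_inv_mul_pow_le {τ M : ℝ} {p r : ℕ} (hτ0 : 0 < τ) (hτ1 : τ < 1 / 100)
    (hM : 1 ≤ M) (hp : 1 ≤ p) (hr : 1 ≤ r) (hpr : C4 τ M < (p : ℝ) ^ r) :
    10 * (M * (C2 τ M / p) ^ (1 + τ)) ^ (2 + τ)⁻¹ * ((p : ℝ) ^ (-(2 + τ)⁻¹)) ^ (r + 1) ≤
      1 / (4 * (p : ℝ) ^ ((1 : ℝ) + τ / 4)) := by
  have hp0 : (0 : ℝ) < p := by exact_mod_cast hp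
  have hC2 : 0 ≤ C2 τ M := by rw [C2, C1]; positivity
  have hK : 0 ≤ M * (C2 τ M / p) ^ (1 + τ) := by positivity
  rw [mul_comm (10 : ℝ), rpow_inv_mul_mul_rpow_neg_inv_pow hK (by norm_num) hp0 (by positivity),
    Real.rpow_inv_le_iff_of_pos (by positivity) (by positivity) (by positivity),
    Real.div_rpow zero_le_one (by positivity), Real.one_rpow,
    div_le_div_iff₀ (by positivity) (by positivity), one_mul]
  have hexp : (p : ℝ) ^ ((1 + τ / 4) * (2 + τ)) =
      (p : ℝ) ^ (1 + τ) * (p : ℝ) ^ ((2 + τ) * τ / 4) * p := by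
    rw [← Real.rpow_add hp0, ← Real.rpow_add_one hp0.ne']
    ring_nf
  calc M * (C2 τ M / p) ^ (1 + τ) * 10 ^ (2 + τ) * (4 * (p : ℝ) ^ ((1 : ℝ) + τ / 4)) ^ (2 + τ)
      = 40 ^ (2 + τ) * M * C2 τ M ^ (1 + τ) * (p : ℝ) ^ ((2 + τ) * τ / 4) * p := by
        rw [Real.div_rpow hC2 hp0.le, Real.mul_rpow (by norm_num) (by positivity),
          ← Real.rpow_mul hp0.le, show (40 : ℝ) = 10 * 4 by norm_num,
          Real.mul_rpow (by norm_num) (by norm_num), hexp]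
        field_simp
    _ ≤ (p : ℝ) ^ r * p := by
        gcongr
        exact forty_rpow_mul_le_pow hτ0 hτ1 hM (by exact_mod_cast hp) hr hpr
    _ = (p : ℝ) ^ (r + 1) := (pow_succ _ _).symm

end GCDGraph

/-- Few edges between unbalanced sets (`UnbalancedSetEdges1`). -/
theorem few_edges_unbalanced (τ M : ℝ) (hτ : τ ∈ Set.Ioo (0 : ℝ) (1 / 100)) (hM : 2 ≤ M)
    (G : GCDGraph) (hδ : 0 < G.density)
    (p : ℕ) (hp : p ∈ R G) (r : ℕ) (hr : 1 ≤ r) (k : ℕ)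
    (hpr : C4 τ M < (p : ℝ) ^ r)
    (hWk : 1 - C2 τ M / (p : ℝ) ≤ muSet G.mu (exactPart G.W p k) / muSet G.mu G.W) :
    (∃ l : ℕ, r + 1 ≤ ((l : ℤ) - (k : ℤ)).natAbs ∧
        M * quality τ G < qualityAt τ G p k l) ∨
    (∑' l : ℕ, (if r + 1 ≤ ((l : ℤ) - (k : ℤ)).natAbs
        then muEdges G.mu (edgesAt G p k l) else 0)) ≤
      muEdges G.mu G.E / (4 * (p : ℝ) ^ ((1 : ℝ) + τ / 4)) := by
  refine or_iff_not_imp_left.2 fun hquality => ?_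
  simp only [not_exists, not_and, not_lt] at hquality
  obtain ⟨hτ0, hτ1⟩ := hτ
  obtain ⟨hpp, hpP, -⟩ := hp
  have hmu := G.mu_nonneg
  have hVW := muSet_mul_muSet_pos_of_density_pos hδ
  have hW : 0 < muSet G.mu G.W := pos_of_mul_pos_right hVW (muSet_nonneg hmu _)
  have hc : 0 ≤ C2 τ M / p := by rw [C2, C1]; positivity
  set K := (M * (C2 τ M / p) ^ (1 + τ)) ^ (2 + τ)⁻¹
  set ρ := (p : ℝ) ^ (-(2 + τ)⁻¹)
  set E := muEdges G.mu G.E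
  have hE : 0 ≤ E := muEdges_nonneg hmu G.E
  have hρ : ρ ≤ 4 / 5 :=
    rpow_neg_inv_le_four_fifths (by exact_mod_cast hpp.two_le) (by linarith) (by linarith)
  have hX : 0 ≤ K * E * ρ ^ (r + 1) := by positivity
  calc _ ≤ 2 * (K * E) * ρ ^ (r + 1) / (1 - ρ) :=
        tsum_ite_le_of_le_geometric (by positivity) (by positivity) (by linarith) k (r + 1)
          fun l hl => muEdges_edgesAt_le_of_qualityAt_le hτ0.le (by linarith) hc hpp.one_lt
            hpP hVW (by omega) (muSet_exactPart_le_of_ne hmu hW hWk (by omega)) (hquality l hl)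
    _ ≤ E * (10 * K * ρ ^ (r + 1)) := by
        rw [div_le_iff₀ (by linarith)]
        nlinarith [mul_nonneg hX (sub_nonneg.2 hρ)]
    _ ≤ E * (1 / (4 * (p : ℝ) ^ ((1 : ℝ) + τ / 4))) :=
        mul_le_mul_of_nonneg_left
          (ten_mul_rpow_inv_mul_pow_le hτ0 hτ1 (by linarith) hpp.one_lt.le hr hpr) hE
    _ = E / (4 * (p : ℝ) ^ ((1 : ℝ) + τ / 4)) := mul_one_div _ _
end

section
/- Let G = (μ,V,W,E,P,f,g) be a GCD graph with edge density δ > 0 and let η ∈ (0,1]. Then one of the following holds: (a) for all sets A ⊆ V and B ⊆ W with μ(A) ≤ η·μ(V) and μ(B) ≤ η·μ(W), one has μ(E ∩ (A×B)) ≤ η^{(2+2τ)/(2+τ)}·μ(E); or (b) there is a GCD subgraph G' = (μ,V',W',E',P,f,g) of G such that q(G') > q(G), V' ⊊ V and W' ⊊ W. -/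
open Finset

open GCDGraph

/-- Few edges between small sets (`SmallSetEdges`). -/
theorem few_edges_small_sets (τ : ℝ) (hτ : τ ∈ Set.Ioo (0 : ℝ) (1 / 100))
    (G : GCDGraph) (hδ : 0 < G.density) (η : ℝ) (hη : η ∈ Set.Ioc (0 : ℝ) 1) :
    (∀ A ⊆ G.V, ∀ B ⊆ G.W,
        muSet G.mu A ≤ η * muSet G.mu G.V → muSet G.mu B ≤ η * muSet G.mu G.W →
        muEdges G.mu (G.E.filter fun e => e.1 ∈ A ∧ e.2 ∈ B) ≤
          η ^ ((2 + 2 * τ) / (2 + τ)) * muEdges G.mu G.E) ∨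
    (∃ G' : GCDGraph, IsSubgraph G' G ∧ G'.P = G.P ∧ G'.f = G.f ∧ G'.g = G.g ∧
      quality τ G < quality τ G' ∧ G'.V ⊂ G.V ∧ G'.W ⊂ G.W) := by
  obtain ⟨hτ0, hτ1⟩ := hτ
  obtain ⟨hη0, hη1'⟩ := hη
  by_cases hcase : ∀ A ⊆ G.V, ∀ B ⊆ G.W,
        muSet G.mu A ≤ η * muSet G.mu G.V → muSet G.mu B ≤ η * muSet G.mu G.W →
        muEdges G.mu (G.E.filter fun e => e.1 ∈ A ∧ e.2 ∈ B) ≤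
          η ^ ((2 + 2 * τ) / (2 + τ)) * muEdges G.mu G.E
  · exact Or.inl hcase
  right
  push_neg at hcase
  obtain ⟨A, hA, B, hB, hμA, hμB, hbig⟩ := hcase
  have hμ := G.mu_nonneg
  have hVnn : 0 ≤ muSet G.mu G.V := Finset.sum_nonneg fun n _ => hμ n
  have hWnn : 0 ≤ muSet G.mu G.W := Finset.sum_nonneg fun n _ => hμ n
  have hAnn : 0 ≤ muSet G.mu A := Finset.sum_nonneg fun n _ => hμ n
  have hBnn : 0 ≤ muSet G.mu B := Finset.sum_nonneg fun n _ => hμ n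
  have hXnn : 0 ≤ muEdges G.mu G.E :=
    Finset.sum_nonneg fun e _ => mul_nonneg (hμ _) (hμ _)
  have hY : 0 < muSet G.mu G.V * muSet G.mu G.W := by
    rcases (mul_nonneg hVnn hWnn).lt_or_eq with h | h
    · exact h
    · exfalso
      have hd : G.density = 0 := by
        rw [GCDGraph.density, densityRaw, ← h, div_zero]
      rw [hd] at hδ; exact lt_irrefl _ hδ
  have hX : 0 < muEdges G.mu G.E := by
    have h : muEdges G.mu G.E = G.density * (muSet G.mu G.V * muSet G.mu G.W) := by
      rw [GCDGraph.density, densityRaw, div_mul_cancel₀ _ hY.ne']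
    rw [h]; exact mul_pos hδ hY
  set E' : Finset (ℕ × ℕ) := G.E.filter fun e => e.1 ∈ A ∧ e.2 ∈ B with hE'
  have ha_leX : muEdges G.mu E' ≤ muEdges G.mu G.E :=
    Finset.sum_le_sum_of_subset_of_nonneg (Finset.filter_subset _ _)
      (fun e _ _ => mul_nonneg (hμ _) (hμ _))
  have ha : 0 < muEdges G.mu E' :=
    lt_of_lt_of_le (by positivity : (0:ℝ) < η ^ ((2 + 2 * τ) / (2 + τ)) * muEdges G.mu G.E)
      hbig.le
  have hE'sub : E' ⊆ A ×ˢ B := by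
    intro e he
    rw [hE', Finset.mem_filter] at he
    exact Finset.mem_product.mpr ⟨he.2.1, he.2.2⟩
  have hE'le : muEdges G.mu E' ≤ muSet G.mu A * muSet G.mu B := by
    calc muEdges G.mu E' ≤ ∑ e ∈ A ×ˢ B, G.mu e.1 * G.mu e.2 :=
          Finset.sum_le_sum_of_subset_of_nonneg hE'sub
            (fun e _ _ => mul_nonneg (hμ _) (hμ _))
      _ = muSet G.mu A * muSet G.mu B := by
          rw [muSet, muSet, Finset.sum_mul_sum, Finset.sum_product]
  have hy : 0 < muSet G.mu A * muSet G.mu B := ha.trans_le hE'le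
  have hApos : 0 < muSet G.mu A := by
    by_contra h
    push_neg at h
    nlinarith
  have hBpos : 0 < muSet G.mu B := by
    by_contra h
    push_neg at h
    nlinarith
  have hVpos : 0 < muSet G.mu G.V := by
    by_contra h
    push_neg at h
    nlinarith
  have hWpos : 0 < muSet G.mu G.W := by
    by_contra h
    push_neg at h
    nlinarith
  have hη1 : η < 1 := by
    rcases lt_or_eq_of_le hη1' with h | h
    · exact h
    · exfalso
      rw [h, Real.one_rpow, one_mul] at hbig
      linarith
  have hAltV : muSet G.mu A < muSet G.mu G.V := lt_of_le_of_lt hμA (by nlinarith)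
  have hBltW : muSet G.mu B < muSet G.mu G.W := lt_of_le_of_lt hμB (by nlinarith)
  have hAne : A ≠ G.V := by
    intro h; rw [h] at hAltV; exact lt_irrefl _ hAltV
  have hBne : B ≠ G.W := by
    intro h; rw [h] at hBltW; exact lt_irrefl _ hBltW
  have hssubA : A ⊂ G.V := lt_of_le_of_ne hA hAne
  have hssubB : B ⊂ G.W := lt_of_le_of_ne hB hBne
  -- positivity of the product over primes
  have hPP : 0 < ∏ p ∈ G.P, ((p : ℝ) ^ (((G.f p : ℤ) - (G.g p : ℤ)).natAbs) *
      ((1 - (if G.f p = G.g p ∧ 1 ≤ G.f p then ((p : ℝ))⁻¹ else 0))⁻¹) ^ 2 *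
      ((1 - (p : ℝ) ^ (-1 - τ / 4))⁻¹) ^ 3) := by
    apply Finset.prod_pos
    intro p hp
    have hp2 : (2:ℝ) ≤ (p:ℝ) := by exact_mod_cast (G.P_prime p hp).two_le
    have h1 : (0:ℝ) < (p : ℝ) ^ (((G.f p : ℤ) - (G.g p : ℤ)).natAbs) :=
      pow_pos (by linarith) _
    have h2 : (0:ℝ) < ((1 - (if G.f p = G.g p ∧ 1 ≤ G.f p then ((p : ℝ))⁻¹ else 0))⁻¹) ^ 2 := by
      split_ifs with h
      · have hpinv : (p:ℝ)⁻¹ ≤ 2⁻¹ := by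
          apply inv_anti₀ <;> linarith
        have : (0:ℝ) < 1 - (p:ℝ)⁻¹ := by norm_num at hpinv ⊢; linarith
        positivity
      · norm_num
    have h3 : (0:ℝ) < ((1 - (p : ℝ) ^ (-1 - τ / 4))⁻¹) ^ 3 := by
      have hlt : (p : ℝ) ^ (-1 - τ / 4) < 1 :=
        Real.rpow_lt_one_of_one_lt_of_neg (by linarith) (by linarith)
      have : (0:ℝ) < 1 - (p : ℝ) ^ (-1 - τ / 4) := by linarith
      positivity
    positivity
  -- main analytic inequality
  have hs : (0:ℝ) < 2 + τ := by linarith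
  have h2 : η ^ (2 + 2 * τ) * muEdges G.mu G.E ^ (2 + τ) < muEdges G.mu E' ^ (2 + τ) := by
    have h := Real.rpow_lt_rpow (by positivity) hbig hs
    rwa [Real.mul_rpow (by positivity) hXnn, ← Real.rpow_mul hη0.le,
      div_mul_cancel₀ _ hs.ne'] at h
  have hle : muSet G.mu A * muSet G.mu B ≤ η ^ (2:ℝ) * (muSet G.mu G.V * muSet G.mu G.W) := by
    have h := mul_le_mul hμA hμB hBnn (by positivity : (0:ℝ) ≤ η * muSet G.mu G.V)
    have h2' : η ^ (2:ℝ) = η * η := by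
      rw [show (2:ℝ) = (1:ℝ) + 1 by norm_num, Real.rpow_add hη0, Real.rpow_one]
    rw [h2']
    calc muSet G.mu A * muSet G.mu B ≤ (η * muSet G.mu G.V) * (η * muSet G.mu G.W) := h
      _ = η * η * (muSet G.mu G.V * muSet G.mu G.W) := by ring
  have h1 : (muSet G.mu A * muSet G.mu B) ^ ((1:ℝ) + τ) ≤
      η ^ (2 + 2 * τ) * (muSet G.mu G.V * muSet G.mu G.W) ^ ((1:ℝ) + τ) := by
    have h := Real.rpow_le_rpow (by positivity) hle (by linarith : (0:ℝ) ≤ 1 + τ)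
    rwa [Real.mul_rpow (by positivity) hY.le, ← Real.rpow_mul hη0.le,
      show (2:ℝ) * (1 + τ) = 2 + 2 * τ by ring] at h
  have main : muEdges G.mu G.E ^ (2 + τ) * (muSet G.mu A * muSet G.mu B) ^ ((1:ℝ) + τ) <
      muEdges G.mu E' ^ (2 + τ) * (muSet G.mu G.V * muSet G.mu G.W) ^ ((1:ℝ) + τ) := by
    have t1 : (0:ℝ) ≤ muEdges G.mu G.E ^ (2 + τ) := Real.rpow_nonneg hXnn _
    have t2 : (0:ℝ) < (muSet G.mu G.V * muSet G.mu G.W) ^ ((1:ℝ) + τ) :=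
      Real.rpow_pos_of_pos hY _
    linarith [mul_le_mul_of_nonneg_left h1 t1, mul_lt_mul_of_pos_right h2 t2]
  have key : (muEdges G.mu G.E / (muSet G.mu G.V * muSet G.mu G.W)) ^ (2 + τ) *
        (muSet G.mu G.V * muSet G.mu G.W) <
      (muEdges G.mu E' / (muSet G.mu A * muSet G.mu B)) ^ (2 + τ) *
        (muSet G.mu A * muSet G.mu B) := by
    rw [Real.div_rpow hXnn hY.le, Real.div_rpow ha.le hy.le,
      div_mul_eq_mul_div, div_mul_eq_mul_div,
      div_lt_div_iff₀ (Real.rpow_pos_of_pos hY _) (Real.rpow_pos_of_pos hy _)]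
    have hYs : (muSet G.mu G.V * muSet G.mu G.W) ^ (2 + τ) =
        (muSet G.mu G.V * muSet G.mu G.W) ^ ((1:ℝ) + τ) *
          (muSet G.mu G.V * muSet G.mu G.W) := by
      rw [show (2:ℝ) + τ = (1 + τ) + 1 by ring, Real.rpow_add hY, Real.rpow_one]
    have hys : (muSet G.mu A * muSet G.mu B) ^ (2 + τ) =
        (muSet G.mu A * muSet G.mu B) ^ ((1:ℝ) + τ) *
          (muSet G.mu A * muSet G.mu B) := by
      rw [show (2:ℝ) + τ = (1 + τ) + 1 by ring, Real.rpow_add hy, Real.rpow_one]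
    rw [hYs, hys]
    calc muEdges G.mu G.E ^ (2 + τ) * (muSet G.mu G.V * muSet G.mu G.W) *
          ((muSet G.mu A * muSet G.mu B) ^ ((1:ℝ) + τ) * (muSet G.mu A * muSet G.mu B))
        = (muEdges G.mu G.E ^ (2 + τ) * (muSet G.mu A * muSet G.mu B) ^ ((1:ℝ) + τ)) *
            ((muSet G.mu A * muSet G.mu B) * (muSet G.mu G.V * muSet G.mu G.W)) := by ring
      _ < (muEdges G.mu E' ^ (2 + τ) * (muSet G.mu G.V * muSet G.mu G.W) ^ ((1:ℝ) + τ)) *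
            ((muSet G.mu A * muSet G.mu B) * (muSet G.mu G.V * muSet G.mu G.W)) :=
          mul_lt_mul_of_pos_right main (mul_pos hy hY)
      _ = muEdges G.mu E' ^ (2 + τ) * (muSet G.mu A * muSet G.mu B) *
            ((muSet G.mu G.V * muSet G.mu G.W) ^ ((1:ℝ) + τ) *
              (muSet G.mu G.V * muSet G.mu G.W)) := by ring
  refine ⟨⟨G.mu, G.mu_nonneg, A, B,
      fun v hv => G.V_pos v (hA hv),
      fun w hw => G.W_pos w (hB hw),
      E', hE'sub, G.P, G.P_prime, G.f, G.g,
      fun p hp v hv => G.f_dvd p hp v (hA hv),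
      fun p hp w hw => G.g_dvd p hp w (hB hw),
      fun p hp e he => G.gcd_exact p hp e (Finset.filter_subset _ _ he)⟩,
    ⟨rfl, hA, hB, Finset.filter_subset _ _, le_refl _, fun _ _ => rfl, fun _ _ => rfl⟩,
    rfl, rfl, rfl, ?_, hssubA, hssubB⟩
  show qualityRaw τ G.mu G.V G.W G.E G.P G.f G.g <
    qualityRaw τ G.mu A B E' G.P G.f G.g
  rw [qualityRaw, qualityRaw, densityRaw, densityRaw]
  linarith [mul_lt_mul_of_pos_right key hPP]
end
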